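/- arXiv:2404.16163 — 2 statements merged into one kernel-verified Lean document; each statement's English description precedes it below -/
import Mathlib

section
/- (Theorem 3) For every agent strategy σ, the minimum over environment strategies γ of the probability Pr_N^{σ,γ,E}(goal) that the perturbed-path process of N achieves the goal equals the minimum over natures γ_m of the probability Pr_{M_N}^{σ,γ_m}(goal) in the MDPST M_N induced by (N, E). Consequently, a strategy maximizes min_γ Pr_N^{σ,γ,E}(goal) if and only if it is an optimal robust strategy for M_N with the goal objective, i.e., it maximizes min_{γ_m} Pr_{M_N}^{σ,γ_m}(goal). -/
open scoped ENNReal Classical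

/-- The finite state history `s_0 … s_i` of an infinite state sequence `ρ`. -/
def stateHist {X : Type*} (ρ : ℕ → X) (i : ℕ) : List X :=
  (List.range (i + 1)).map ρ

/-- Extend a tuple `f : Fin n → α` to an infinite sequence, using default value `d`. -/
def extendF {α : Type*} (d : α) {n : ℕ} (f : Fin n → α) : ℕ → α :=
  fun i => if h : i < n then f ⟨i, h⟩ else d

/-- Prepend an element to an infinite sequence. -/
def prepend {α : Type*} (a : α) (f : ℕ → α) : ℕ → α
  | 0 => a
  | i + 1 => f i

/-- The goal, given by a DFA `(q0, δ, acc)` over the alphabet of labels, is achieved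
within the first `n` steps of the state sequence `ρ` (with labeling `L`): some finite
trace `L(ρ 0) … L(ρ k)` with `k ≤ n` is accepted by the DFA. -/
def goalWithin {X Q Λ : Type*} (L : X → Λ) (q0 : Q) (δ : Q → Λ → Q) (acc : Set Q)
    (ρ : ℕ → X) (n : ℕ) : Prop :=
  ∃ k ≤ n, ((stateHist ρ k).map L).foldl δ q0 ∈ acc

/-- The mass assignment of the MDPST induced by a nondeterministic domain and
action-instruction errors: `T_N(s,a,Θ) = Σ_{a' ∈ A(s), F_n(s,a') = Θ} err(s,a)(a')`. -/
noncomputable def inducedTN {S A : Type*} [DecidableEq S] (Aset : S → Finset A)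
    (Fn : S → A → Finset S) (err : S → A → PMF A) (s : S) (a : A)
    (Θ : Finset S) : ℝ≥0∞ :=
  ∑ a' ∈ (Aset s).filter (fun a' => Fn s a' = Θ), err s a a'

/-- An environment strategy `γ` maps a finite state-action history, the current state,
and an instructed action to a successor state; it complies with the domain if the
successor belongs to `F_n(s, a')` whenever `a'` is applicable at `s`. -/
def Compliant {S A : Type*} (Aset : S → Finset A) (Fn : S → A → Finset S)
    (γ : List (S × A) → S → A → S) : Prop :=
  ∀ (h : List (S × A)) (s : S) (a' : A), a' ∈ Aset s → γ h s a' ∈ Fn s a'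

/-- The current state (first component) and the state-action history so far (second
component) of the perturbed-path process of the nondeterministic domain `(s0, Fn)`
under environment strategy `γ` and the sequence `g` of actually instructed actions. -/
def runEnv {S A : Type*} (s0 : S) (γ : List (S × A) → S → A → S) (g : ℕ → A) :
    ℕ → S × List (S × A)
  | 0 => (s0, [])
  | i + 1 =>
    ((γ (runEnv s0 γ g i).2 (runEnv s0 γ g i).1 (g i)),
      (runEnv s0 γ g i).2 ++ [((runEnv s0 γ g i).1, g i)])

/-- `Pr_N^{σ,γ,E}(GoalW)`: the probability that the perturbed-path process of the
nondeterministic domain `(s0, Fn)` under agent strategy `σ`, environment strategy `γ`,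
and action-instruction errors `err` achieves the goal `GoalW` (the supremum over
horizons of the probabilities of the cylinder events); at each step, the actually
instructed action is sampled from `err(current state, intended action)` and the next
state is chosen by `γ`. -/
noncomputable def prN {S A : Type*} [Fintype A] (s0 : S) (dA : A)
    (err : S → A → PMF A) (γ : List (S × A) → S → A → S) (σ : List S → A)
    (GoalW : (ℕ → S) → ℕ → Prop) : ℝ≥0∞ :=
  ⨆ n : ℕ, ∑ g : Fin n → A,
    (∏ i ∈ Finset.range n,
      err ((runEnv s0 γ (extendF dA g) i).1)
        (σ (stateHist (fun j => (runEnv s0 γ (extendF dA g) j).1) i))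
        (extendF dA g i)) *
    (if GoalW (fun j => (runEnv s0 γ (extendF dA g) j).1) n then 1 else 0)

/-- A nature of the MDPST induced by `(N, E)`: it maps every finite state history and
applicable action at its last state to a feasible distribution, i.e., a distribution
`h_α(s') = Σ_{Θ ∈ F(s,a) : α Θ = s'} T_N(s,a,Θ)` induced by some selection `α` on the
collection `F(s,a) = {F_n(s,a') : a' ∈ A(s)}`. -/
def Feasible {S A : Type*} [DecidableEq S] [DecidableEq A] (Aset : S → Finset A)
    (Fn : S → A → Finset S) (err : S → A → PMF A)
    (γm : List S → A → S → ℝ≥0∞) : Prop :=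
  ∀ (l : List S) (s : S) (a : A), a ∈ Aset s →
    ∃ α : Finset S → S, (∀ Θ ∈ (Aset s).image (Fn s), α Θ ∈ Θ) ∧
      ∀ s' : S, γm (l ++ [s]) a s'
        = ∑ Θ ∈ ((Aset s).image (Fn s)).filter (fun Θ => α Θ = s'),
            inducedTN Aset Fn err s a Θ

/-- `Pr_{M_N}^{σ,γ_m}(GoalW)`: the probability that the MDPST induced by `(N, E)`,
under agent strategy `σ` and nature `γm`, achieves the goal `GoalW`. -/
noncomputable def prMN {S A : Type*} [Fintype S] (s0 : S)
    (γm : List S → A → S → ℝ≥0∞) (σ : List S → A)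
    (GoalW : (ℕ → S) → ℕ → Prop) : ℝ≥0∞ :=
  ⨆ n : ℕ, ∑ f : Fin n → S,
    (∏ i ∈ Finset.range n,
      γm (stateHist (prepend s0 (extendF s0 f)) i)
        (σ (stateHist (prepend s0 (extendF s0 f)) i))
        (prepend s0 (extendF s0 f) (i + 1))) *
    (if GoalW (prepend s0 (extendF s0 f)) n then 1 else 0)

section Aux

variable {S A Q P : Type*} [Fintype S] [Fintype A] [Fintype Q]
    [DecidableEq S] [DecidableEq A]
variable (L : S → Set P) (q0 : Q) (δ : Q → Set P → Q) (acc : Set Q)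

/-- some prefix of the state history `l` is accepted -/
def AccL (l : List S) : Prop :=
  ∃ k < l.length, ((l.take (k+1)).map L).foldl δ q0 ∈ acc

lemma stateHist_take (ρ : ℕ → S) {k n : ℕ} (hk : k ≤ n) :
    (stateHist ρ n).take (k+1) = stateHist ρ k := by
  unfold stateHist
  rw [← List.map_take, List.take_range]
  have : (k + 1) ⊓ (n + 1) = k + 1 := by omega
  rw [this]

lemma goalWithin_iff_AccL (ρ : ℕ → S) (n : ℕ) :
    goalWithin L q0 δ acc ρ n ↔ AccL L q0 δ acc (stateHist ρ n) := by
  unfold goalWithin AccL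
  constructor
  · rintro ⟨k, hk, h⟩
    refine ⟨k, ?_, ?_⟩
    · simp [stateHist]; omega
    · rwa [stateHist_take ρ hk]
  · rintro ⟨k, hk, h⟩
    have hk' : k ≤ n := by simp [stateHist] at hk; omega
    exact ⟨k, hk', by rwa [stateHist_take ρ hk'] at h⟩

lemma AccL_append (l : List S) (x : S) (h : AccL L q0 δ acc l) :
    AccL L q0 δ acc (l ++ [x]) := by
  obtain ⟨k, hk, h⟩ := h
  refine ⟨k, by simp; omega, ?_⟩
  rwa [List.take_append_of_le_length (by omega)]

lemma stateHist_zero (ρ : ℕ → S) : stateHist ρ 0 = [ρ 0] := by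
  simp [stateHist, List.range_succ]

lemma stateHist_succ_prepend (x : S) (ρ : ℕ → S) (i : ℕ) :
    stateHist (prepend x ρ) (i+1) = x :: stateHist ρ i := by
  unfold stateHist
  rw [List.range_succ_eq_map]
  simp [prepend, Function.comp]

lemma extendF_cons {n : ℕ} (d a : A) (g : Fin n → A) :
    extendF d (Fin.cons a g) = prepend a (extendF d g) := by
  funext i
  cases i with
  | zero => simp [extendF, prepend]
  | succ i =>
    simp only [extendF, prepend, Nat.add_lt_add_iff_right]
    by_cases h : i < n
    · simp only [dif_pos h]
      exact Fin.cons_succ (α := fun _ => A) a g ⟨i, h⟩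
    · simp [h]

end Aux

section Aux2

variable {S A Q P : Type*} [Fintype S] [Fintype A] [Fintype Q]
    [DecidableEq S] [DecidableEq A]
variable (L : S → Set P) (q0 : Q) (δ : Q → Set P → Q) (acc : Set Q)
variable (Aset : S → Finset A) (Fn : S → A → Finset S) (err : S → A → PMF A)
variable (σ : List S → A)

/-- generalized run from an arbitrary start -/
def grun (γ : List (S × A) → S → A → S) (h0 : List (S × A)) (s : S) (g : ℕ → A) :
    ℕ → S × List (S × A)
  | 0 => (s, h0)
  | i + 1 =>
    ((γ (grun γ h0 s g i).2 (grun γ h0 s g i).1 (g i)),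
      (grun γ h0 s g i).2 ++ [((grun γ h0 s g i).1, g i)])

lemma runEnv_eq_grun (s0 : S) (γ : List (S × A) → S → A → S) (g : ℕ → A) (i : ℕ) :
    runEnv s0 γ g i = grun γ [] s0 g i := by
  induction i with
  | zero => rfl
  | succ i ih => simp only [runEnv, grun, ih]

lemma grun_shift (γ : List (S × A) → S → A → S) (h0 : List (S × A)) (s : S) (a : A)
    (g : ℕ → A) (i : ℕ) :
    grun γ h0 s (prepend a g) (i + 1) = grun γ (h0 ++ [(s, a)]) (γ h0 s a) g i := by
  induction i with
  | zero => rfl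
  | succ i ih =>
      calc grun γ h0 s (prepend a g) (i + 1 + 1)
          = (γ (grun γ h0 s (prepend a g) (i + 1)).2 (grun γ h0 s (prepend a g) (i + 1)).1 (g i),
             (grun γ h0 s (prepend a g) (i + 1)).2 ++ [((grun γ h0 s (prepend a g) (i + 1)).1, g i)]) := rfl
        _ = grun γ (h0 ++ [(s, a)]) (γ h0 s a) g (i + 1) := by rw [ih]; rfl

noncomputable def vR (γ : List (S × A) → S → A → S) :
    ℕ → List (S × A) → List S → S → ℝ≥0∞
  | 0, _, l, s => if AccL L q0 δ acc (l ++ [s]) then 1 else 0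
  | n + 1, h, l, s =>
      ∑ a' : A, err s (σ (l ++ [s])) a' *
        vR γ n (h ++ [(s, a')]) (l ++ [s]) (γ h s a')

noncomputable def wR (γm : List S → A → S → ℝ≥0∞) : ℕ → List S → S → ℝ≥0∞
  | 0, l, s => if AccL L q0 δ acc (l ++ [s]) then 1 else 0
  | n + 1, l, s =>
      ∑ s' : S, γm (l ++ [s]) (σ (l ++ [s])) s' * wR γm n (l ++ [s]) s'

noncomputable def mR : ℕ → List S → S → ℝ≥0∞
  | 0, l, s => if AccL L q0 δ acc (l ++ [s]) then 1 else 0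
  | n + 1, l, s =>
      ⨅ α : {α : Finset S → S // ∀ Θ ∈ (Aset s).image (Fn s), α Θ ∈ Θ},
        ∑ Θ ∈ (Aset s).image (Fn s),
          inducedTN Aset Fn err s (σ (l ++ [s])) Θ * mR n (l ++ [s]) (α.1 Θ)

/-- total mass of the induced mass assignment is 1 -/
lemma sum_TN (hsupp : ∀ s a, a ∈ Aset s → (err s a).support ⊆ ↑(Aset s))
    (s : S) (a : A) (ha : a ∈ Aset s) :
    ∑ Θ ∈ (Aset s).image (Fn s), inducedTN Aset Fn err s a Θ = 1 := by
  unfold inducedTN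
  have hfib := Finset.sum_fiberwise_of_maps_to (s := Aset s) (t := (Aset s).image (Fn s))
    (g := Fn s) (fun a' ha' => Finset.mem_image_of_mem _ ha') (fun a' => err s a a')
  rw [hfib]
  have h1 : ∑ a' : A, err s a a' = 1 := by
    rw [← tsum_eq_sum (L := SummationFilter.unconditional A) (s := Finset.univ) (by simp)]
    exact (err s a).tsum_coe
  rw [← h1]
  refine Finset.sum_subset (Finset.subset_univ _) (fun x _ hx => ?_)
  rw [PMF.apply_eq_zero_iff]
  exact fun hmem => hx (hsupp s a ha hmem)

/-- default selection -/
noncomputable def selD (s : S) : Finset S → S :=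
  fun Θ => if h : Θ.Nonempty then h.choose else s

lemma selD_mem (hFn : ∀ s a, a ∈ Aset s → (Fn s a).Nonempty) (s : S) :
    ∀ Θ ∈ (Aset s).image (Fn s), selD s Θ ∈ Θ := by
  intro Θ hΘ
  obtain ⟨a', ha', rfl⟩ := Finset.mem_image.mp hΘ
  have hne : (Fn s a').Nonempty := hFn s a' ha'
  simp only [selD, dif_pos hne]
  exact hne.choose_spec

end Aux2

section Aux3

variable {S A Q P : Type*} [Fintype S] [Fintype A] [Fintype Q]
    [DecidableEq S] [DecidableEq A]
variable (L : S → Set P) (q0 : Q) (δ : Q → Set P → Q) (acc : Set Q)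
variable (Aset : S → Finset A) (Fn : S → A → Finset S) (err : S → A → PMF A)
variable (σ : List S → A)

lemma vR_eq_sum (γ : List (S × A) → S → A → S) (dA : A) :
    ∀ (n : ℕ) (h : List (S × A)) (l : List S) (s : S),
      (∑ g : Fin n → A,
        (∏ i ∈ Finset.range n,
          err ((grun γ h s (extendF dA g) i).1)
            (σ (l ++ stateHist (fun j => (grun γ h s (extendF dA g) j).1) i))
            (extendF dA g i)) *
        (if AccL L q0 δ acc
            (l ++ stateHist (fun j => (grun γ h s (extendF dA g) j).1) n) then 1 else 0))
      = vR L q0 δ acc err σ γ n h l s := by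
  intro n
  induction n with
  | zero =>
    intro h l s
    rw [vR, Fintype.sum_unique]
    simp [stateHist_zero]
    rfl
  | succ n ih =>
    intro h l s
    rw [vR, ← Equiv.sum_comp (Fin.consEquiv (fun _ : Fin (n+1) => A)), Fintype.sum_prod_type]
    refine Finset.sum_congr rfl (fun a _ => ?_)
    rw [← ih (h ++ [(s, a)]) (l ++ [s]) (γ h s a), Finset.mul_sum]
    refine Finset.sum_congr rfl (fun g' _ => ?_)
    have hcons : (Fin.consEquiv (fun _ : Fin (n+1) => A)) (a, g') = Fin.cons a g' := by
      funext i; exact Fin.consEquiv_apply _ _ _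
    rw [hcons, extendF_cons]
    have hsh : ∀ j, (grun γ h s (prepend a (extendF dA g')) j).1
        = prepend s (fun j' => (grun γ (h ++ [(s, a)]) (γ h s a) (extendF dA g') j').1) j := by
      intro j
      cases j with
      | zero => rfl
      | succ j => exact congrArg Prod.fst (grun_shift γ h s a (extendF dA g') j)
    rw [Finset.prod_range_succ']
    simp only [hsh]
    simp only [stateHist_succ_prepend, stateHist_zero]
    simp only [prepend]
    simp only [List.append_assoc, List.singleton_append]
    ring

lemma wR_eq_sum (γm : List S → A → S → ℝ≥0∞) :
    ∀ (n : ℕ) (l : List S) (s d : S),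
      (∑ f : Fin n → S,
        (∏ i ∈ Finset.range n,
          γm (l ++ stateHist (prepend s (extendF d f)) i)
            (σ (l ++ stateHist (prepend s (extendF d f)) i))
            (prepend s (extendF d f) (i + 1))) *
        (if AccL L q0 δ acc (l ++ stateHist (prepend s (extendF d f)) n) then 1 else 0))
      = wR L q0 δ acc σ γm n l s := by
  intro n
  induction n with
  | zero =>
    intro l s d
    rw [wR, Fintype.sum_unique]
    simp [stateHist_zero]
    rfl
  | succ n ih =>
    intro l s d
    rw [wR, ← Equiv.sum_comp (Fin.consEquiv (fun _ : Fin (n+1) => S)), Fintype.sum_prod_type]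
    refine Finset.sum_congr rfl (fun x _ => ?_)
    rw [← ih (l ++ [s]) x d, Finset.mul_sum]
    refine Finset.sum_congr rfl (fun f' _ => ?_)
    have hcons : (Fin.consEquiv (fun _ : Fin (n+1) => S)) (x, f') = Fin.cons x f' := by
      funext i; exact Fin.consEquiv_apply _ _ _
    rw [hcons, extendF_cons]
    rw [Finset.prod_range_succ']
    simp only [stateHist_succ_prepend, stateHist_zero]
    simp only [prepend]
    simp only [List.append_assoc, List.singleton_append]
    ring


lemma prN_eq (s0 : S) (dA : A) (γ : List (S × A) → S → A → S) :
    prN s0 dA err γ σ (goalWithin L q0 δ acc)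
      = ⨆ n, vR L q0 δ acc err σ γ n [] [] s0 := by
  unfold prN
  refine iSup_congr (fun n => ?_)
  rw [← vR_eq_sum L q0 δ acc err σ γ dA n [] [] s0]
  refine Finset.sum_congr rfl (fun g _ => ?_)
  simp only [runEnv_eq_grun, List.nil_append, goalWithin_iff_AccL L q0 δ acc]

lemma prMN_eq (s0 : S) (γm : List S → A → S → ℝ≥0∞) :
    prMN s0 γm σ (goalWithin L q0 δ acc)
      = ⨆ n, wR L q0 δ acc σ γm n [] s0 := by
  unfold prMN
  refine iSup_congr (fun n => ?_)
  rw [← wR_eq_sum L q0 δ acc σ γm n [] s0 s0]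
  refine Finset.sum_congr rfl (fun f _ => ?_)
  simp only [List.nil_append, goalWithin_iff_AccL L q0 δ acc]

end Aux3

section Aux4

variable {S A Q P : Type*} [Fintype S] [Fintype A] [Fintype Q]
    [DecidableEq S] [DecidableEq A]
variable (L : S → Set P) (q0 : Q) (δ : Q → Set P → Q) (acc : Set Q)
variable (Aset : S → Finset A) (Fn : S → A → Finset S) (err : S → A → PMF A)
variable (σ : List S → A)

lemma mR_mono (hσ : ∀ (l : List S) (s : S), σ (l ++ [s]) ∈ Aset s)
    (hsupp : ∀ s a, a ∈ Aset s → (err s a).support ⊆ ↑(Aset s)) :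
    ∀ (n : ℕ) (l : List S) (s : S),
      mR L q0 δ acc Aset Fn err σ n l s ≤ mR L q0 δ acc Aset Fn err σ (n + 1) l s := by
  intro n
  induction n with
  | zero =>
    intro l s
    rw [mR, mR]
    refine le_iInf (fun α => ?_)
    by_cases hacc : AccL L q0 δ acc (l ++ [s])
    · rw [if_pos hacc]
      calc (1 : ℝ≥0∞)
          = ∑ Θ ∈ (Aset s).image (Fn s), inducedTN Aset Fn err s (σ (l ++ [s])) Θ :=
            (sum_TN Aset Fn err hsupp s _ (hσ l s)).symm
        _ ≤ _ := by
            refine Finset.sum_le_sum (fun Θ hΘ => ?_)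
            rw [mR, if_pos (AccL_append L q0 δ acc _ _ hacc), mul_one]
    · rw [if_neg hacc]
      exact bot_le
  | succ n ih =>
    intro l s
    rw [mR, show mR L q0 δ acc Aset Fn err σ (n + 1 + 1) l s = ⨅ α : {α : Finset S → S //
        ∀ Θ ∈ (Aset s).image (Fn s), α Θ ∈ Θ},
        ∑ Θ ∈ (Aset s).image (Fn s),
          inducedTN Aset Fn err s (σ (l ++ [s])) Θ
            * mR L q0 δ acc Aset Fn err σ (n + 1) (l ++ [s]) (α.1 Θ) from rfl]
    exact iInf_mono (fun α => Finset.sum_le_sum (fun Θ _ =>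
      mul_le_mul_right (ih (l ++ [s]) (α.1 Θ)) _))

lemma mR_le_vR (γ : List (S × A) → S → A → S) (hγ : Compliant Aset Fn γ)
    (hσ : ∀ (l : List S) (s : S), σ (l ++ [s]) ∈ Aset s)
    (hFn : ∀ s a, a ∈ Aset s → (Fn s a).Nonempty) :
    ∀ (n : ℕ) (h : List (S × A)) (l : List S) (s : S),
      mR L q0 δ acc Aset Fn err σ n l s ≤ vR L q0 δ acc err σ γ n h l s := by
  intro n
  induction n with
  | zero => intro h l s; rw [mR, vR]
  | succ n ih =>
    intro h l s
    rw [mR, vR]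
    -- choose a pointwise-minimizing selection β
    have hex : ∀ Θ : Finset S, Θ.Nonempty → ∃ x ∈ Θ, ∀ y ∈ Θ,
        mR L q0 δ acc Aset Fn err σ n (l ++ [s]) x ≤ mR L q0 δ acc Aset Fn err σ n (l ++ [s]) y :=
      fun Θ hΘ => Θ.exists_min_image _ hΘ
    classical
    set β : Finset S → S := fun Θ => if hΘ : Θ.Nonempty then (hex Θ hΘ).choose else s with hβ
    have hβmem : ∀ Θ : Finset S, (hΘ : Θ.Nonempty) → β Θ ∈ Θ := by
      intro Θ hΘ; rw [hβ]; simp only [dif_pos hΘ]; exact (hex Θ hΘ).choose_spec.1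
    have hβmin : ∀ Θ : Finset S, (hΘ : Θ.Nonempty) → ∀ y ∈ Θ,
        mR L q0 δ acc Aset Fn err σ n (l ++ [s]) (β Θ) ≤ mR L q0 δ acc Aset Fn err σ n (l ++ [s]) y := by
      intro Θ hΘ; rw [hβ]; simp only [dif_pos hΘ]; exact (hex Θ hΘ).choose_spec.2
    have hβsel : ∀ Θ ∈ (Aset s).image (Fn s), β Θ ∈ Θ := by
      intro Θ hΘ
      obtain ⟨a', ha', rfl⟩ := Finset.mem_image.mp hΘ
      exact hβmem _ (hFn s a' ha')
    refine le_trans (iInf_le _ ⟨β, hβsel⟩) ?_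
    calc ∑ Θ ∈ (Aset s).image (Fn s),
          inducedTN Aset Fn err s (σ (l ++ [s])) Θ * mR L q0 δ acc Aset Fn err σ n (l ++ [s]) (β Θ)
        = ∑ Θ ∈ (Aset s).image (Fn s), ∑ a' ∈ (Aset s).filter (fun a' => Fn s a' = Θ),
            err s (σ (l ++ [s])) a' * mR L q0 δ acc Aset Fn err σ n (l ++ [s]) (β Θ) := by
          refine Finset.sum_congr rfl (fun Θ _ => ?_)
          rw [inducedTN, Finset.sum_mul]
      _ ≤ ∑ Θ ∈ (Aset s).image (Fn s), ∑ a' ∈ (Aset s).filter (fun a' => Fn s a' = Θ),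
            err s (σ (l ++ [s])) a' * mR L q0 δ acc Aset Fn err σ n (l ++ [s]) (γ h s a') := by
          refine Finset.sum_le_sum (fun Θ hΘ => Finset.sum_le_sum (fun a' ha' => ?_))
          obtain ⟨ha'A, hfn⟩ := Finset.mem_filter.mp ha'
          refine mul_le_mul_right ?_ _
          have hmem : γ h s a' ∈ Θ := hfn ▸ hγ h s a' ha'A
          have hne : Θ.Nonempty := ⟨_, hmem⟩
          exact hβmin Θ hne _ hmem
      _ = ∑ a' ∈ Aset s,
            err s (σ (l ++ [s])) a' * mR L q0 δ acc Aset Fn err σ n (l ++ [s]) (γ h s a') :=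
          Finset.sum_fiberwise_of_maps_to (fun a' ha' => Finset.mem_image_of_mem _ ha') _
      _ ≤ ∑ a' ∈ Aset s,
            err s (σ (l ++ [s])) a' * vR L q0 δ acc err σ γ n (h ++ [(s, a')]) (l ++ [s]) (γ h s a') :=
          Finset.sum_le_sum (fun a' _ => mul_le_mul_right (ih _ _ _) _)
      _ ≤ _ := Finset.sum_le_sum_of_subset (Finset.subset_univ _)

end Aux4

section Aux5

variable {S A Q P : Type*} [Fintype S] [Fintype A] [Fintype Q]
    [DecidableEq S] [DecidableEq A]
variable (L : S → Set P) (q0 : Q) (δ : Q → Set P → Q) (acc : Set Q)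
variable (Aset : S → Finset A) (Fn : S → A → Finset S) (err : S → A → PMF A)
variable (σ : List S → A)

/-- limit of the minimal finite-horizon values -/
noncomputable def MR (l : List S) (s : S) : ℝ≥0∞ :=
  ⨆ n, mR L q0 δ acc Aset Fn err σ n l s

lemma exists_selstar (hσ : ∀ (l : List S) (s : S), σ (l ++ [s]) ∈ Aset s)
    (hsupp : ∀ s a, a ∈ Aset s → (err s a).support ⊆ ↑(Aset s))
    (hFn : ∀ s a, a ∈ Aset s → (Fn s a).Nonempty)
    (l : List S) (s : S) :
    ∃ β : Finset S → S, (∀ Θ ∈ (Aset s).image (Fn s), β Θ ∈ Θ) ∧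
      ∑ Θ ∈ (Aset s).image (Fn s),
        inducedTN Aset Fn err s (σ (l ++ [s])) Θ
          * MR L q0 δ acc Aset Fn err σ (l ++ [s]) (β Θ)
        ≤ MR L q0 δ acc Aset Fn err σ l s := by
  haveI hne : Nonempty {α : Finset S → S // ∀ Θ ∈ (Aset s).image (Fn s), α Θ ∈ Θ} :=
    ⟨⟨selD s, selD_mem Aset Fn hFn s⟩⟩
  set G : ℕ → {α : Finset S → S // ∀ Θ ∈ (Aset s).image (Fn s), α Θ ∈ Θ} → ℝ≥0∞ :=
    fun n α => ∑ Θ ∈ (Aset s).image (Fn s),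
      inducedTN Aset Fn err s (σ (l ++ [s])) Θ
        * mR L q0 δ acc Aset Fn err σ n (l ++ [s]) (α.1 Θ) with hG
  have hmst : ∀ (n : ℕ) (x : S), mR L q0 δ acc Aset Fn err σ n (l ++ [s]) x
      ≤ mR L q0 δ acc Aset Fn err σ (n + 1) (l ++ [s]) x :=
    fun n x => mR_mono L q0 δ acc Aset Fn err σ hσ hsupp n (l ++ [s]) x
  have hGmono : ∀ α, Monotone (fun n => G n α) := fun α =>
    monotone_nat_of_le_succ (fun n =>
      Finset.sum_le_sum (fun Θ _ => mul_le_mul_right (hmst n _) _))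
  have hminex : ∀ n, ∃ α, ∀ α', G n α ≤ G n α' := fun n => Finite.exists_min (G n)
  choose c hc using hminex
  obtain ⟨αs, hαs⟩ := Finite.exists_infinite_fiber c
  have hinf : (c ⁻¹' {αs}).Infinite := Set.infinite_coe_iff.mp hαs
  have hkey : ∀ n, mR L q0 δ acc Aset Fn err σ (n + 1) l s = G n (c n) := by
    intro n
    rw [mR]
    exact le_antisymm (iInf_le _ (c n)) (le_iInf (hc n))
  refine ⟨αs.1, αs.2, ?_⟩
  have h1 : ∑ Θ ∈ (Aset s).image (Fn s),
      inducedTN Aset Fn err s (σ (l ++ [s])) Θ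
        * MR L q0 δ acc Aset Fn err σ (l ++ [s]) (αs.1 Θ)
      = ⨆ n, G n αs := by
    unfold MR
    calc ∑ Θ ∈ (Aset s).image (Fn s),
          inducedTN Aset Fn err s (σ (l ++ [s])) Θ
            * ⨆ n, mR L q0 δ acc Aset Fn err σ n (l ++ [s]) (αs.1 Θ)
        = ∑ Θ ∈ (Aset s).image (Fn s), ⨆ n,
            inducedTN Aset Fn err s (σ (l ++ [s])) Θ
              * mR L q0 δ acc Aset Fn err σ n (l ++ [s]) (αs.1 Θ) := by
          simp_rw [ENNReal.mul_iSup]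
      _ = ⨆ n, G n αs :=
          ENNReal.finsetSum_iSup_of_monotone (fun Θ =>
            monotone_nat_of_le_succ (fun n => mul_le_mul_right (hmst n _) _))
  rw [h1]
  refine iSup_le (fun n => ?_)
  obtain ⟨n', hn'mem, hnn'⟩ := hinf.exists_gt n
  have hcn' : c n' = αs := hn'mem
  calc G n αs ≤ G n' αs := hGmono αs (le_of_lt hnn')
    _ = G n' (c n') := by rw [hcn']
    _ = mR L q0 δ acc Aset Fn err σ (n' + 1) l s := (hkey n').symm
    _ ≤ _ := le_iSup (fun k => mR L q0 δ acc Aset Fn err σ k l s) (n' + 1)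

end Aux5

section Aux6

variable {S A Q P : Type*} [Fintype S] [Fintype A] [Fintype Q]
    [DecidableEq S] [DecidableEq A]
variable (L : S → Set P) (q0 : Q) (δ : Q → Set P → Q) (acc : Set Q)
variable (Aset : S → Finset A) (Fn : S → A → Finset S) (err : S → A → PMF A)
variable (σ : List S → A)

/-- the nature induced by a history-indexed family of selections `sel` -/
noncomputable def gammaStar (sel : List S → S → Finset S → S) :
    List S → A → S → ℝ≥0∞ := fun Lh a s' =>
  if hL : Lh = [] then 0
  else
    ∑ Θ ∈ ((Aset (Lh.getLast hL)).image (Fn (Lh.getLast hL))).filter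
        (fun Θ => (if a = σ Lh then sel Lh.dropLast (Lh.getLast hL)
                   else selD (Lh.getLast hL)) Θ = s'),
      inducedTN Aset Fn err (Lh.getLast hL) a Θ

lemma gammaStar_apply (sel : List S → S → Finset S → S) (l : List S) (s : S) (a : A) (s' : S) :
    gammaStar Aset Fn err σ sel (l ++ [s]) a s'
      = ∑ Θ ∈ ((Aset s).image (Fn s)).filter
          (fun Θ => (if a = σ (l ++ [s]) then sel l s else selD s) Θ = s'),
        inducedTN Aset Fn err s a Θ := by
  have hne : l ++ [s] ≠ [] := by simp
  rw [gammaStar, dif_neg hne]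
  simp only [List.getLast_concat, List.dropLast_concat]

lemma gammaStar_feasible (sel : List S → S → Finset S → S)
    (hsel : ∀ l s, ∀ Θ ∈ (Aset s).image (Fn s), sel l s Θ ∈ Θ)
    (hFn : ∀ s a, a ∈ Aset s → (Fn s a).Nonempty) :
    Feasible Aset Fn err (gammaStar Aset Fn err σ sel) := by
  intro l s a _
  refine ⟨if a = σ (l ++ [s]) then sel l s else selD s, ?_, ?_⟩
  · intro Θ hΘ
    split_ifs
    · exact hsel l s Θ hΘ
    · exact selD_mem Aset Fn hFn s Θ hΘ
  · intro s'
    rw [gammaStar_apply]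

lemma wR_gammaStar_le (sel : List S → S → Finset S → S)
    (hselle : ∀ l s, ∑ Θ ∈ (Aset s).image (Fn s),
        inducedTN Aset Fn err s (σ (l ++ [s])) Θ
          * MR L q0 δ acc Aset Fn err σ (l ++ [s]) (sel l s Θ)
        ≤ MR L q0 δ acc Aset Fn err σ l s) :
    ∀ (n : ℕ) (l : List S) (s : S),
      wR L q0 δ acc σ (gammaStar Aset Fn err σ sel) n l s
        ≤ MR L q0 δ acc Aset Fn err σ l s := by
  intro n
  induction n with
  | zero =>
    intro l s
    have h0 : wR L q0 δ acc σ (gammaStar Aset Fn err σ sel) 0 l s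
        = mR L q0 δ acc Aset Fn err σ 0 l s := rfl
    rw [h0]
    exact le_iSup (fun k => mR L q0 δ acc Aset Fn err σ k l s) 0
  | succ n ih =>
    intro l s
    rw [wR]
    calc ∑ s' : S, gammaStar Aset Fn err σ sel (l ++ [s]) (σ (l ++ [s])) s'
          * wR L q0 δ acc σ (gammaStar Aset Fn err σ sel) n (l ++ [s]) s'
        = ∑ s' : S, ∑ Θ ∈ ((Aset s).image (Fn s)).filter (fun Θ => sel l s Θ = s'),
            inducedTN Aset Fn err s (σ (l ++ [s])) Θ
              * wR L q0 δ acc σ (gammaStar Aset Fn err σ sel) n (l ++ [s]) s' := by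
          refine Finset.sum_congr rfl (fun s' _ => ?_)
          rw [gammaStar_apply, if_pos rfl, Finset.sum_mul]
      _ = ∑ s' : S, ∑ Θ ∈ ((Aset s).image (Fn s)).filter (fun Θ => sel l s Θ = s'),
            inducedTN Aset Fn err s (σ (l ++ [s])) Θ
              * wR L q0 δ acc σ (gammaStar Aset Fn err σ sel) n (l ++ [s]) (sel l s Θ) := by
          refine Finset.sum_congr rfl (fun s' _ => Finset.sum_congr rfl (fun Θ hΘ => ?_))
          rw [(Finset.mem_filter.mp hΘ).2]
      _ = ∑ Θ ∈ (Aset s).image (Fn s),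
            inducedTN Aset Fn err s (σ (l ++ [s])) Θ
              * wR L q0 δ acc σ (gammaStar Aset Fn err σ sel) n (l ++ [s]) (sel l s Θ) :=
          Finset.sum_fiberwise_of_maps_to (fun Θ _ => Finset.mem_univ _) _
      _ ≤ ∑ Θ ∈ (Aset s).image (Fn s),
            inducedTN Aset Fn err s (σ (l ++ [s])) Θ
              * MR L q0 δ acc Aset Fn err σ (l ++ [s]) (sel l s Θ) :=
          Finset.sum_le_sum (fun Θ _ => mul_le_mul_right (ih _ _) _)
      _ ≤ _ := hselle l s

lemma exists_gamma_of_feasible (γm : List S → A → S → ℝ≥0∞)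
    (hfe : Feasible Aset Fn err γm)
    (hσ : ∀ (l : List S) (s : S), σ (l ++ [s]) ∈ Aset s)
    (hsupp : ∀ s a, a ∈ Aset s → (err s a).support ⊆ ↑(Aset s)) :
    ∃ γ : List (S × A) → S → A → S, Compliant Aset Fn γ ∧
      ∀ (n : ℕ) (h : List (S × A)) (l : List S) (s : S), h.map Prod.fst = l →
        vR L q0 δ acc err σ γ n h l s ≤ wR L q0 δ acc σ γm n l s := by
  choose αg hαmem hαeq using hfe
  refine ⟨fun hh s a' => αg (hh.map Prod.fst) s (σ (hh.map Prod.fst ++ [s])) (hσ _ s) (Fn s a'),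
    ?_, ?_⟩
  · intro hh s a' ha'
    exact hαmem _ _ _ (hσ _ s) _ (Finset.mem_image_of_mem _ ha')
  · intro n
    induction n with
    | zero => intro h l s _; rw [vR, wR]
    | succ n ih =>
      intro h l s hinv
      subst hinv
      rw [vR, wR]
      set l := h.map Prod.fst with hl
      set a := σ (l ++ [s]) with ha
      set β := αg l s a (hσ l s) with hβ
      calc ∑ a' : A, err s a a' * vR L q0 δ acc err σ _ n (h ++ [(s, a')]) (l ++ [s]) (β (Fn s a'))
          = ∑ a' ∈ Aset s, err s a a'
              * vR L q0 δ acc err σ _ n (h ++ [(s, a')]) (l ++ [s]) (β (Fn s a')) := by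
            refine (Finset.sum_subset (Finset.subset_univ _) (fun a' _ ha' => ?_)).symm
            rw [(err s a).apply_eq_zero_iff a' |>.mpr (fun hmem => ha' (hsupp s a (hσ l s) hmem)),
              zero_mul]
        _ ≤ ∑ a' ∈ Aset s, err s a a' * wR L q0 δ acc σ γm n (l ++ [s]) (β (Fn s a')) := by
            refine Finset.sum_le_sum (fun a' _ => mul_le_mul_right ?_ _)
            exact ih (h ++ [(s, a')]) (l ++ [s]) (β (Fn s a')) (by simp [hl])
        _ = ∑ Θ ∈ (Aset s).image (Fn s), ∑ a' ∈ (Aset s).filter (fun a' => Fn s a' = Θ),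
              err s a a' * wR L q0 δ acc σ γm n (l ++ [s]) (β (Fn s a')) :=
            (Finset.sum_fiberwise_of_maps_to (fun a' ha' => Finset.mem_image_of_mem _ ha') _).symm
        _ = ∑ Θ ∈ (Aset s).image (Fn s),
              inducedTN Aset Fn err s a Θ * wR L q0 δ acc σ γm n (l ++ [s]) (β Θ) := by
            refine Finset.sum_congr rfl (fun Θ _ => ?_)
            rw [inducedTN, Finset.sum_mul]
            refine Finset.sum_congr rfl (fun a' ha' => ?_)
            rw [(Finset.mem_filter.mp ha').2]
        _ = ∑ s' : S, γm (l ++ [s]) a s' * wR L q0 δ acc σ γm n (l ++ [s]) s' := by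
            symm
            calc ∑ s' : S, γm (l ++ [s]) a s' * wR L q0 δ acc σ γm n (l ++ [s]) s'
                = ∑ s' : S, ∑ Θ ∈ ((Aset s).image (Fn s)).filter (fun Θ => β Θ = s'),
                    inducedTN Aset Fn err s a Θ * wR L q0 δ acc σ γm n (l ++ [s]) s' := by
                  refine Finset.sum_congr rfl (fun s' _ => ?_)
                  rw [hαeq l s a (hσ l s) s', Finset.sum_mul]
              _ = ∑ s' : S, ∑ Θ ∈ ((Aset s).image (Fn s)).filter (fun Θ => β Θ = s'),
                    inducedTN Aset Fn err s a Θ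
                      * wR L q0 δ acc σ γm n (l ++ [s]) (β Θ) := by
                  refine Finset.sum_congr rfl (fun s' _ => Finset.sum_congr rfl (fun Θ hΘ => ?_))
                  rw [(Finset.mem_filter.mp hΘ).2]
              _ = ∑ Θ ∈ (Aset s).image (Fn s),
                    inducedTN Aset Fn err s a Θ * wR L q0 δ acc σ γm n (l ++ [s]) (β Θ) :=
                  Finset.sum_fiberwise_of_maps_to (fun Θ _ => Finset.mem_univ _) _

end Aux6

/-- Theorem 3: For every agent strategy `σ`, the minimum over
environment strategies `γ` of `Pr_N^{σ,γ,E}(goal)` equals the minimum over natures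
`γ_m` of `Pr_{M_N}^{σ,γ_m}(goal)` in the MDPST `M_N` induced by `(N, E)`;
consequently, a strategy maximizes `min_γ Pr_N^{σ,γ,E}(goal)` iff it is an optimal
robust strategy for `M_N` with the goal objective. -/
theorem stmt12 {S A Q P : Type*} [Fintype S] [Fintype A] [Fintype Q]
    [DecidableEq S] [DecidableEq A]
    (s0 : S) (Aset : S → Finset A) (hA : ∀ s, (Aset s).Nonempty) (dA : A)
    (Fn : S → A → Finset S)
    (hFn : ∀ s a, a ∈ Aset s → (Fn s a).Nonempty)
    (L : S → Set P)
    (err : S → A → PMF A)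
    (hsupp : ∀ s a, a ∈ Aset s → (err s a).support ⊆ ↑(Aset s))
    (q0 : Q) (δ : Q → Set P → Q) (acc : Set Q) :
    (∀ σ : List S → A, (∀ (l : List S) (s : S), σ (l ++ [s]) ∈ Aset s) →
      (⨅ γ : {γ : List (S × A) → S → A → S // Compliant Aset Fn γ},
          prN s0 dA err γ.1 σ (goalWithin L q0 δ acc))
        = (⨅ γm : {γm : List S → A → S → ℝ≥0∞ // Feasible Aset Fn err γm},
            prMN s0 γm.1 σ (goalWithin L q0 δ acc))) ∧
    (∀ σstar : List S → A, (∀ (l : List S) (s : S), σstar (l ++ [s]) ∈ Aset s) →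
      ((∀ σ : List S → A, (∀ (l : List S) (s : S), σ (l ++ [s]) ∈ Aset s) →
          (⨅ γ : {γ : List (S × A) → S → A → S // Compliant Aset Fn γ},
              prN s0 dA err γ.1 σ (goalWithin L q0 δ acc))
            ≤ ⨅ γ : {γ : List (S × A) → S → A → S // Compliant Aset Fn γ},
                prN s0 dA err γ.1 σstar (goalWithin L q0 δ acc)) ↔
       (∀ σ : List S → A, (∀ (l : List S) (s : S), σ (l ++ [s]) ∈ Aset s) →
          (⨅ γm : {γm : List S → A → S → ℝ≥0∞ // Feasible Aset Fn err γm},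
              prMN s0 γm.1 σ (goalWithin L q0 δ acc))
            ≤ ⨅ γm : {γm : List S → A → S → ℝ≥0∞ // Feasible Aset Fn err γm},
                prMN s0 γm.1 σstar (goalWithin L q0 δ acc)))) := by
  have main : ∀ σ : List S → A, (∀ (l : List S) (s : S), σ (l ++ [s]) ∈ Aset s) →
      (⨅ γ : {γ : List (S × A) → S → A → S // Compliant Aset Fn γ},
          prN s0 dA err γ.1 σ (goalWithin L q0 δ acc))
        = (⨅ γm : {γm : List S → A → S → ℝ≥0∞ // Feasible Aset Fn err γm},
            prMN s0 γm.1 σ (goalWithin L q0 δ acc)) := by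
    intro σ hσ
    apply le_antisymm
    · refine le_iInf (fun γm => ?_)
      obtain ⟨γ, hγc, hle⟩ :=
        exists_gamma_of_feasible L q0 δ acc Aset Fn err σ γm.1 γm.2 hσ hsupp
      refine iInf_le_of_le ⟨γ, hγc⟩ ?_
      rw [prN_eq L q0 δ acc err σ s0 dA γ, prMN_eq L q0 δ acc σ s0 γm.1]
      exact iSup_mono (fun n => hle n [] [] s0 rfl)
    · obtain hsel := fun l s => exists_selstar L q0 δ acc Aset Fn err σ hσ hsupp hFn l s
      choose sel hselmem hselle using hsel
      refine le_iInf (fun γ => ?_)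
      refine iInf_le_of_le ⟨gammaStar Aset Fn err σ sel,
        gammaStar_feasible Aset Fn err σ sel hselmem hFn⟩ ?_
      rw [prMN_eq L q0 δ acc σ s0 _, prN_eq L q0 δ acc err σ s0 dA γ.1]
      calc (⨆ n, wR L q0 δ acc σ (gammaStar Aset Fn err σ sel) n [] s0)
          ≤ MR L q0 δ acc Aset Fn err σ [] s0 :=
            iSup_le (fun n => wR_gammaStar_le L q0 δ acc Aset Fn err σ sel hselle n [] s0)
        _ ≤ ⨆ n, vR L q0 δ acc err σ γ.1 n [] [] s0 := by
            unfold MR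
            exact iSup_mono (fun n =>
              mR_le_vR L q0 δ acc Aset Fn err σ γ.1 γ.2 hσ hFn n [] [] s0)
  refine ⟨main, fun σstar hσstar => ⟨fun H σ hσ => ?_, fun H σ hσ => ?_⟩⟩
  · rw [← main σ hσ, ← main σstar hσstar]
    exact H σ hσ
  · rw [main σ hσ, main σstar hσstar]
    exact H σ hσ
end

section
/- (Theorem 4) The maximum over agent strategies σ of the minimum over natures γ_m of the probability of reaching acc× = {(s,q) : q ∈ acc} in the product MDPST M_N× = M_N ⊗ Aut equals the maximum over agent strategies of the minimum over environment strategies of Pr_N^{σ,γ,E}(goal); moreover, any optimal robust strategy of M_N× for the reachability goal acc× induces, via the lifting of paths of N to paths of M_N×, an optimal strategy for the trembling-hand problem (N, goal, E). -/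
open scoped ENNReal Classical

/-- The goal set `acc× = {(s,q) : q ∈ acc}` of the product MDPST is reached within the
first `n` steps of the state sequence `τ` on `S × Q`. -/
def reachWithin {S Q : Type*} (acc : Set Q) (τ : ℕ → S × Q) (n : ℕ) : Prop :=
  ∃ i ≤ n, (τ i).2 ∈ acc

/-- The probability that an MDPST over states `X` with initial state `x0`, under agent
strategy `σ` and nature `γm` (mapping state histories and actions to distributions),
achieves the goal `GoalW`. -/
noncomputable def prMDPST {X A : Type*} [Fintype X] (x0 : X)
    (γm : List X → A → X → ℝ≥0∞) (σ : List X → A)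
    (GoalW : (ℕ → X) → ℕ → Prop) : ℝ≥0∞ :=
  ⨆ n : ℕ, ∑ f : Fin n → X,
    (∏ i ∈ Finset.range n,
      γm (stateHist (prepend x0 (extendF x0 f)) i)
        (σ (stateHist (prepend x0 (extendF x0 f)) i))
        (prepend x0 (extendF x0 f) (i + 1))) *
    (if GoalW (prepend x0 (extendF x0 f)) n then 1 else 0)

/-- The set-valued transition function of the product MDPST `M_N× = M_N ⊗ Aut`:
`F×((s,q),a) = {Θ_q : Θ ∈ F(s,a)}` with `Θ_q = {(s', δ(q, L(s'))) : s' ∈ Θ}`, where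
`F(s,a) = {F_n(s,a') : a' ∈ A(s)}`. -/
def prodF {S A Q Λ : Type*} [DecidableEq S] [DecidableEq Q] (Aset : S → Finset A)
    (Fn : S → A → Finset S) (L : S → Λ) (δ : Q → Λ → Q) (x : S × Q) :
    Finset (Finset (S × Q)) :=
  ((Aset x.1).image (Fn x.1)).image (fun Θ => Θ.image (fun s' => (s', δ x.2 (L s'))))

/-- The mass assignment of the product MDPST `M_N× = M_N ⊗ Aut`:
`T×((s,q),a,Θ') = Σ_{Θ ∈ F(s,a), Θ_q = Θ'} T_N(s,a,Θ)`. -/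
noncomputable def prodTN {S A Q Λ : Type*} [DecidableEq S] [DecidableEq Q]
    (Aset : S → Finset A) (Fn : S → A → Finset S) (err : S → A → PMF A)
    (L : S → Λ) (δ : Q → Λ → Q) (x : S × Q) (a : A) (Θ' : Finset (S × Q)) : ℝ≥0∞ :=
  ∑ Θ ∈ ((Aset x.1).image (Fn x.1)).filter
      (fun Θ => Θ.image (fun s' => (s', δ x.2 (L s'))) = Θ'),
    inducedTN Aset Fn err x.1 a Θ

/-- A nature of the product MDPST: it maps every finite state history and applicable
action to a feasible distribution, i.e., a distribution induced by a selection on the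
collection `F×((s,q),a)`. -/
def FeasibleProd {S A Q Λ : Type*} [DecidableEq S] [DecidableEq A] [DecidableEq Q]
    (Aset : S → Finset A) (Fn : S → A → Finset S) (err : S → A → PMF A)
    (L : S → Λ) (δ : Q → Λ → Q)
    (γx : List (S × Q) → A → (S × Q) → ℝ≥0∞) : Prop :=
  ∀ (l : List (S × Q)) (x : S × Q) (a : A), a ∈ Aset x.1 →
    ∃ α : Finset (S × Q) → S × Q,
      (∀ Θ' ∈ prodF Aset Fn L δ x, α Θ' ∈ Θ') ∧
      ∀ y : S × Q, γx (l ++ [x]) a y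
        = ∑ Θ' ∈ (prodF Aset Fn L δ x).filter (fun Θ' => α Θ' = y),
            prodTN Aset Fn err L δ x a Θ'

/-- The unique lifting of a finite state history of `N` to a finite state history of
the product MDPST `M_N×`, tracking the DFA state. -/
def liftHist {S Q Λ : Type*} (L : S → Λ) (δ : Q → Λ → Q) : List S → Q → List (S × Q)
  | [], _ => []
  | s :: rest, q => (s, δ q (L s)) :: liftHist L δ rest (δ q (L s))


lemma TH.sum_filter_mul {X : Type*} [Fintype X] [DecidableEq X]
    (t : Finset (Finset X)) (α : Finset X → X) (c : Finset X → ℝ≥0∞) (w : X → ℝ≥0∞) :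
    ∑ y : X, (∑ Θ ∈ t.filter (fun Θ => α Θ = y), c Θ) * w y
      = ∑ Θ ∈ t, c Θ * w (α Θ) := by
  calc ∑ y : X, (∑ Θ ∈ t.filter (fun Θ => α Θ = y), c Θ) * w y
      = ∑ y : X, ∑ Θ ∈ t.filter (fun Θ => α Θ = y), c Θ * w (α Θ) := by
        refine Finset.sum_congr rfl fun y _ => ?_
        rw [Finset.sum_mul]
        refine Finset.sum_congr rfl fun Θ hΘ => ?_
        rw [(Finset.mem_filter.1 hΘ).2]
    _ = _ := Finset.sum_fiberwise_of_maps_to (fun _ _ => Finset.mem_univ _) _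

lemma TH.iInf_iSup_of_monotone {ι : Type*} [Finite ι] [Nonempty ι]
    (h : ι → ℕ → ℝ≥0∞) (hm : ∀ a, Monotone (h a)) :
    ⨅ a, ⨆ n, h a n = ⨆ n, ⨅ a, h a n := by
  refine le_antisymm ?_ (iSup_iInf_le_iInf_iSup (fun n a => h a n))
  choose φ hφ using fun n => Finite.exists_min (fun a => h a n)
  obtain ⟨a₀, ha₀⟩ := Finite.exists_infinite_fiber φ
  have key : ∀ n, ∃ m, n ≤ m ∧ φ m = a₀ := by
    intro n
    by_contra hc
    push_neg at hc
    have hsub : (φ ⁻¹' {a₀}) ⊆ Set.Iio n := by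
      intro m hmem
      simp only [Set.mem_preimage, Set.mem_singleton_iff] at hmem
      exact lt_of_not_ge fun h' => hc m h' hmem
    exact (Set.not_infinite.2 ((Set.finite_Iio n).subset hsub)) (Set.infinite_coe_iff.1 ha₀)
  refine iInf_le_of_le a₀ (iSup_le fun n => ?_)
  obtain ⟨m, hnm, hmφ⟩ := key n
  have h1 : h a₀ n ≤ h a₀ m := hm a₀ hnm
  have h2 : h a₀ m ≤ ⨅ a, h a m := by
    refine le_iInf fun a => ?_
    rw [← hmφ]
    exact hφ m a
  exact le_trans h1 (le_trans h2 (le_iSup (fun n => ⨅ a, h a n) m))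
namespace TH
open List

variable {S Q Λ X α : Type*}

/-- DFA state after reading a word. -/
def qA (L : S → Λ) (δ : Q → Λ → Q) (q : Q) (l : List S) : Q := (l.map L).foldl δ q

lemma qA_nil (L : S → Λ) (δ : Q → Λ → Q) (q : Q) : qA L δ q [] = q := rfl

lemma qA_snoc (L : S → Λ) (δ : Q → Λ → Q) (q : Q) (l : List S) (s : S) :
    qA L δ q (l ++ [s]) = δ (qA L δ q l) (L s) := by
  simp [qA]

lemma liftHist_append (L : S → Λ) (δ : Q → Λ → Q) (l1 l2 : List S) (q : Q) :
    liftHist L δ (l1 ++ l2) q = liftHist L δ l1 q ++ liftHist L δ l2 (qA L δ q l1) := by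
  induction l1 generalizing q with
  | nil => simp [liftHist, qA]
  | cons s t ih => simp [liftHist, ih, qA]

lemma liftHist_singleton (L : S → Λ) (δ : Q → Λ → Q) (s : S) (q : Q) :
    liftHist L δ [s] q = [(s, δ q (L s))] := rfl

lemma liftHist_snoc (L : S → Λ) (δ : Q → Λ → Q) (l : List S) (s : S) (q : Q) :
    liftHist L δ (l ++ [s]) q = liftHist L δ l q ++ [(s, δ (qA L δ q l) (L s))] := by
  rw [liftHist_append, liftHist_singleton]

lemma map_fst_liftHist (L : S → Λ) (δ : Q → Λ → Q) (l : List S) (q : Q) :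
    (liftHist L δ l q).map Prod.fst = l := by
  induction l generalizing q with
  | nil => rfl
  | cons s t ih => simp [liftHist, ih]

lemma mem_liftHist_iff (L : S → Λ) (δ : Q → Λ → Q) (acc : Set Q) (l : List S) (q : Q) :
    (∃ z ∈ liftHist L δ l q, z.2 ∈ acc) ↔
      ∃ k < l.length, ((l.take (k+1)).map L).foldl δ q ∈ acc := by
  induction l generalizing q with
  | nil => simp [liftHist]
  | cons s t ih =>
    simp only [liftHist, List.mem_cons, List.length_cons]
    constructor
    · rintro ⟨z, hz | hz, hacc⟩
      · refine ⟨0, Nat.succ_pos _, ?_⟩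
        subst hz; simpa using hacc
      · obtain ⟨k, hk, hfold⟩ := (ih (δ q (L s))).1 ⟨z, hz, hacc⟩
        refine ⟨k+1, by omega, ?_⟩
        simpa [List.take_succ_cons] using hfold
    · rintro ⟨k, hk, hfold⟩
      cases k with
      | zero =>
        exact ⟨(s, δ q (L s)), Or.inl rfl, by simpa using hfold⟩
      | succ j =>
        have hfold' : ((t.take (j+1)).map L).foldl δ (δ q (L s)) ∈ acc := by
          simpa [List.take_succ_cons] using hfold
        obtain ⟨z, hz, hacc⟩ := (ih (δ q (L s))).2 ⟨j, by omega, hfold'⟩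
        exact ⟨z, Or.inr hz, hacc⟩

lemma length_stateHist (ρ : ℕ → α) (n : ℕ) : (stateHist ρ n).length = n + 1 := by
  simp [stateHist]

lemma stateHist_take (ρ : ℕ → α) {k n : ℕ} (h : k ≤ n) :
    (stateHist ρ n).take (k+1) = stateHist ρ k := by
  simp only [stateHist, ← List.map_take, List.take_range]
  congr 2
  omega

lemma stateHist_zero (ρ : ℕ → α) : stateHist ρ 0 = [ρ 0] := by
  simp [stateHist, List.range_succ]

lemma stateHist_succ (ρ : ℕ → α) (n : ℕ) :
    stateHist ρ (n+1) = stateHist ρ n ++ [ρ (n+1)] := by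
  simp [stateHist, List.range_succ]

lemma stateHist_cons (ρ : ℕ → α) (n : ℕ) :
    stateHist ρ n = ρ 0 :: (List.range n).map (fun j => ρ (j+1)) := by
  simp [stateHist, List.range_succ_eq_map, Function.comp]

lemma goalWithin_iff {P : Type*} (L : S → Set P) (q0 : Q) (δ : Q → Set P → Q) (acc : Set Q)
    (ρ : ℕ → S) (n : ℕ) :
    goalWithin L q0 δ acc ρ n ↔ ∃ z ∈ liftHist L δ (stateHist ρ n) q0, z.2 ∈ acc := by
  rw [mem_liftHist_iff, goalWithin]
  constructor
  · rintro ⟨k, hk, hf⟩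
    exact ⟨k, by rw [length_stateHist]; omega, by rwa [stateHist_take ρ hk]⟩
  · rintro ⟨k, hk, hf⟩
    rw [length_stateHist] at hk
    exact ⟨k, by omega, by rwa [stateHist_take ρ (by omega)] at hf⟩

lemma reachWithin_iff {S' : Type*} (acc : Set Q) (τ : ℕ → S' × Q) (n : ℕ) :
    reachWithin acc τ n ↔ ∃ z ∈ stateHist τ n, z.2 ∈ acc := by
  simp only [reachWithin, stateHist, List.mem_map, List.mem_range, Nat.lt_succ_iff]
  constructor
  · rintro ⟨i, hi, h⟩; exact ⟨τ i, ⟨i, hi, rfl⟩, h⟩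
  · rintro ⟨z, ⟨i, hi, rfl⟩, h⟩; exact ⟨i, hi, h⟩

lemma extendF_lt (d : α) {n : ℕ} (f : Fin n → α) {j : ℕ} (h : j < n) :
    extendF d f j = f ⟨j, h⟩ := dif_pos h

lemma prepend_zero (a : α) (f : ℕ → α) : prepend a f 0 = a := rfl
lemma prepend_succ (a : α) (f : ℕ → α) (j : ℕ) : prepend a f (j+1) = f j := rfl

lemma take_ofFn_extendF (d : α) {n : ℕ} (f : Fin n → α) {i : ℕ} (h : i ≤ n) :
    (List.range i).map (extendF d f) = (List.ofFn f).take i := by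
  induction i with
  | zero => simp
  | succ i ih =>
    rw [List.range_succ, List.map_append, ih (by omega), List.take_succ]
    have hi : i < n := by omega
    simp [extendF_lt d f hi, List.getElem?_eq_getElem, hi]

lemma stateHist_prepend_extendF (x0 : α) {n : ℕ} (f : Fin n → α) {i : ℕ} (h : i ≤ n) :
    stateHist (prepend x0 (extendF x0 f)) i = x0 :: (List.ofFn f).take i := by
  rw [stateHist_cons]
  congr 1
  have : (fun j => prepend x0 (extendF x0 f) (j+1)) = extendF x0 f := rfl
  rw [this]
  exact take_ofFn_extendF x0 f h

end TH
namespace TH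
open List

variable {X A St : Type*}

noncomputable def recWgen [Fintype X] (κ : List X → X → ℝ≥0∞) (ind : List X → ℝ≥0∞) :
    ℕ → List X → ℝ≥0∞
  | 0, l => ind l
  | n+1, l => ∑ y : X, κ l y * recWgen κ ind n (l ++ [y])

def iterE (step : St → A → St) (u : St) (ga : ℕ → A) : ℕ → St
  | 0 => u
  | i+1 => step (iterE step u ga i) (ga i)

noncomputable def recNgen [Fintype A] (step : St → A → St) (w : St → A → ℝ≥0∞)
    (ind : St → ℝ≥0∞) : ℕ → St → ℝ≥0∞
  | 0, u => ind u
  | n+1, u => ∑ a' : A, w u a' * recNgen step w ind n (step u a')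

lemma sum_succ_split [Fintype X] {M : Type*} [AddCommMonoid M] {n : ℕ}
    (F : (Fin (n+1) → X) → M) :
    ∑ f : Fin (n+1) → X, F f = ∑ y : X, ∑ f' : Fin n → X, F (Fin.cons y f') := by
  rw [← Fintype.sum_equiv (Fin.consEquiv (fun _ : Fin (n+1) => X))
    (fun p => F (Fin.cons p.1 p.2)) F (fun p => rfl), Fintype.sum_prod_type]

lemma extendF_cons_succ {d : A} {n : ℕ} (a : A) (g : Fin n → A) :
    (fun j => extendF d (Fin.cons a g : Fin (n+1) → A) (j+1)) = extendF d g := by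
  funext j
  simp only [extendF]
  by_cases h : j < n
  · rw [dif_pos (by omega : j + 1 < n + 1), dif_pos h]
    have he : (⟨j+1, by omega⟩ : Fin (n+1)) = (⟨j, h⟩ : Fin n).succ := rfl
    rw [he, Fin.cons_succ]
  · rw [dif_neg (by omega), dif_neg h]

lemma extendF_cons_zero {d : A} {n : ℕ} (a : A) (g : Fin n → A) :
    extendF d (Fin.cons a g : Fin (n+1) → A) 0 = a := by
  rw [extendF_lt d _ (Nat.succ_pos n)]
  rfl

lemma iterE_shift (step : St → A → St) (u : St) (ga : ℕ → A) (i : ℕ) :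
    iterE step u ga (i+1) = iterE step (step u (ga 0)) (fun j => ga (j+1)) i := by
  induction i with
  | zero => rfl
  | succ i ih => rw [iterE, ih]; rfl

/-- Sum over path tuples equals the backward recursion, MDPST side. -/
lemma sum_paths [Fintype X] (κ : List X → X → ℝ≥0∞) (ind : List X → ℝ≥0∞) :
    ∀ (n : ℕ) (l : List X),
      (∑ f : Fin n → X,
        (∏ i : Fin n, κ (l ++ (List.ofFn f).take (i : ℕ)) (f i)) * ind (l ++ List.ofFn f))
        = recWgen κ ind n l := by
  intro n
  induction n with
  | zero =>
    intro l
    simp [recWgen]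
  | succ n ih =>
    intro l
    rw [recWgen, sum_succ_split]
    refine Finset.sum_congr rfl fun y _ => ?_
    rw [← ih (l ++ [y]), Finset.mul_sum]
    refine Finset.sum_congr rfl fun f' _ => ?_
    have hofn : List.ofFn (Fin.cons y f' : Fin (n+1) → X) = y :: List.ofFn f' := by
      rw [List.ofFn_succ]
      simp
    rw [hofn, Fin.prod_univ_succ]
    have h0 : κ (l ++ (y :: List.ofFn f').take ((0 : Fin (n+1)) : ℕ)) ((Fin.cons y f' : Fin (n+1) → X) 0) = κ l y := by
      rw [show ((0 : Fin (n+1)) : ℕ) = 0 from rfl, List.take_zero, List.append_nil, Fin.cons_zero]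
    rw [h0]
    have hterm : ∀ i : Fin n,
        κ (l ++ (y :: List.ofFn f').take ((i.succ : Fin (n+1)) : ℕ)) ((Fin.cons y f' : Fin (n+1) → X) i.succ)
          = κ ((l ++ [y]) ++ (List.ofFn f').take (i : ℕ)) (f' i) := by
      intro i
      rw [show ((i.succ : Fin (n+1)) : ℕ) = (i:ℕ)+1 from rfl, List.take_succ_cons,
        Fin.cons_succ, List.append_cons]
    rw [Finset.prod_congr rfl fun i _ => hterm i]
    have hind : l ++ y :: List.ofFn f' = (l ++ [y]) ++ List.ofFn f' := by simp
    rw [hind, mul_assoc]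

/-- Sum over action tuples equals the backward recursion, domain side. -/
lemma sum_apaths [Fintype A] (dA : A) (step : St → A → St) (w : St → A → ℝ≥0∞)
    (ind : St → ℝ≥0∞) :
    ∀ (n : ℕ) (u : St),
      (∑ g : Fin n → A,
        (∏ i : Fin n, w (iterE step u (extendF dA g) (i : ℕ)) (extendF dA g (i : ℕ)))
          * ind (iterE step u (extendF dA g) n))
        = recNgen step w ind n u := by
  intro n
  induction n with
  | zero => intro u; simp [recNgen, iterE]
  | succ n ih =>
    intro u
    rw [recNgen, sum_succ_split]
    refine Finset.sum_congr rfl fun a _ => ?_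
    rw [← ih (step u a), Finset.mul_sum]
    refine Finset.sum_congr rfl fun g _ => ?_
    have hga : ∀ i : ℕ, iterE step u (extendF dA (Fin.cons a g : Fin (n+1) → A)) (i+1)
        = iterE step (step u a) (extendF dA g) i := by
      intro i
      rw [iterE_shift, extendF_cons_zero, extendF_cons_succ]
    rw [Fin.prod_univ_succ]
    have h0 : w (iterE step u (extendF dA (Fin.cons a g)) ((0 : Fin (n+1)) : ℕ))
        (extendF dA (Fin.cons a g) ((0 : Fin (n+1)) : ℕ)) = w u a := by
      rw [show ((0 : Fin (n+1)) : ℕ) = 0 from rfl, extendF_cons_zero]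
      rfl
    rw [h0]
    have hterm : ∀ i : Fin n,
        w (iterE step u (extendF dA (Fin.cons a g)) ((i.succ : Fin (n+1)) : ℕ))
          (extendF dA (Fin.cons a g) ((i.succ : Fin (n+1)) : ℕ))
        = w (iterE step (step u a) (extendF dA g) (i : ℕ)) (extendF dA g (i : ℕ)) := by
      intro i
      have hs : ((i.succ : Fin (n+1)) : ℕ) = (i : ℕ) + 1 := rfl
      rw [hs, hga, show extendF dA (Fin.cons a g : Fin (n+1) → A) ((i:ℕ)+1) = extendF dA g i from
        congrFun (extendF_cons_succ a g) (i : ℕ)]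
    rw [Finset.prod_congr rfl fun i _ => hterm i]
    have hn : iterE step u (extendF dA (Fin.cons a g)) (n+1) = iterE step (step u a) (extendF dA g) n := hga n
    rw [hn, mul_assoc]

end TH
namespace TH
open List

noncomputable def indA {S' Q : Type*} (acc : Set Q) (l : List (S' × Q)) : ℝ≥0∞ :=
  if ∃ z ∈ l, z.2 ∈ acc then 1 else 0

section Unfold
variable {S A Q P : Type*} [Fintype S] [Fintype A] [Fintype Q]

lemma prMDPST_eq (acc : Set Q) (γm : List (S × Q) → A → (S × Q) → ℝ≥0∞)
    (σx : List (S × Q) → A) (x0 : S × Q) :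
    prMDPST x0 γm σx (reachWithin acc)
      = ⨆ n, recWgen (fun l y => γm l (σx l) y) (indA acc) n [x0] := by
  unfold prMDPST
  congr 1; funext n
  rw [← sum_paths]
  refine Finset.sum_congr rfl fun f _ => ?_
  have hSH : ∀ i : ℕ, i ≤ n →
      stateHist (prepend x0 (extendF x0 f)) i = [x0] ++ (List.ofFn f).take i := by
    intro i hi
    rw [stateHist_prepend_extendF x0 f hi]
    rfl
  congr 1
  · rw [Finset.prod_range (fun i => γm (stateHist (prepend x0 (extendF x0 f)) i)
      (σx (stateHist (prepend x0 (extendF x0 f)) i)) (prepend x0 (extendF x0 f) (i+1)))]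
    refine Finset.prod_congr rfl fun i _ => ?_
    rw [hSH (i : ℕ) (le_of_lt i.isLt)]
    have hnext : prepend x0 (extendF x0 f) ((i : ℕ) + 1) = f i := by
      rw [prepend_succ, extendF_lt x0 f i.isLt]
    rw [hnext]
  · rw [indA]
    refine if_congr ?_ rfl rfl
    rw [reachWithin_iff acc _ n, hSH n le_rfl,
      List.take_of_length_le (le_of_eq (List.length_ofFn (f := f)))]

lemma runEnv_eq_iterE {S A : Type*} (s0 : S) (γ : List (S × A) → S → A → S)
    (ga : ℕ → A) (i : ℕ) :
    runEnv s0 γ ga i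
      = iterE (fun u a' => (γ u.2 u.1 a', u.2 ++ [(u.1, a')])) (s0, []) ga i := by
  induction i with
  | zero => rfl
  | succ i ih => rw [runEnv, iterE, ih]

lemma stateHist_runEnv {S A : Type*} (s0 : S) (γ : List (S × A) → S → A → S)
    (ga : ℕ → A) (i : ℕ) :
    stateHist (fun j => (runEnv s0 γ ga j).1) i
      = (runEnv s0 γ ga i).2.map Prod.fst ++ [(runEnv s0 γ ga i).1] := by
  induction i with
  | zero => rw [stateHist_zero]; rfl
  | succ i ih =>
    rw [stateHist_succ, ih, runEnv]
    simp

lemma prN_eq {P Q : Type*} (L : S → Set P) (q0 : Q) (δ : Q → Set P → Q) (acc : Set Q)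
    (err : S → A → PMF A) (s0 : S) (dA : A)
    (γ : List (S × A) → S → A → S) (σ : List S → A) :
    prN s0 dA err γ σ (goalWithin L q0 δ acc)
      = ⨆ n, recNgen (fun u a' => (γ u.2 u.1 a', u.2 ++ [(u.1, a')]))
          (fun u a' => err u.1 (σ (u.2.map Prod.fst ++ [u.1])) a')
          (fun u => indA acc (liftHist L δ (u.2.map Prod.fst ++ [u.1]) q0)) n (s0, []) := by
  unfold prN
  congr 1; funext n
  rw [← sum_apaths dA]
  refine Finset.sum_congr rfl fun g _ => ?_
  congr 1
  · rw [Finset.prod_range (fun i => err ((runEnv s0 γ (extendF dA g) i).1)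
      (σ (stateHist (fun j => (runEnv s0 γ (extendF dA g) j).1) i)) (extendF dA g i))]
    refine Finset.prod_congr rfl fun i _ => ?_
    rw [stateHist_runEnv, runEnv_eq_iterE]
  · rw [indA]
    refine if_congr ?_ rfl rfl
    rw [goalWithin_iff L q0 δ acc _ n, stateHist_runEnv, runEnv_eq_iterE]

end Unfold
end TH
namespace TH
section Struct
variable {S A Q P : Type*} [Fintype S] [Fintype A] [Fintype Q]
  [DecidableEq S] [DecidableEq A] [DecidableEq Q]
variable (Aset : S → Finset A) (Fn : S → A → Finset S) (L : S → Set P)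
  (err : S → A → PMF A) (δ : Q → Set P → Q)

/-- The lifted successor set `Θ_q` of an action. -/
def mSet (x : S × Q) (a' : A) : Finset (S × Q) :=
  (Fn x.1 a').image (fun s' => (s', δ x.2 (L s')))

lemma prodF_eq (x : S × Q) :
    prodF Aset Fn L δ x = (Aset x.1).image (mSet Fn L δ x) := by
  rw [prodF, Finset.image_image]
  rfl

lemma mem_prodF {x : S × Q} {Θ' : Finset (S × Q)} :
    Θ' ∈ prodF Aset Fn L δ x ↔ ∃ a' ∈ Aset x.1, mSet Fn L δ x a' = Θ' := by
  rw [prodF_eq, Finset.mem_image]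

lemma prodF_nonempty (hFn : ∀ s a, a ∈ Aset s → (Fn s a).Nonempty)
    {x : S × Q} {Θ' : Finset (S × Q)} (h : Θ' ∈ prodF Aset Fn L δ x) : Θ'.Nonempty := by
  obtain ⟨a', ha', rfl⟩ := (mem_prodF Aset Fn L δ).1 h
  exact (hFn x.1 a' ha').image _

lemma mem_mSet_snd {x : S × Q} {a' : A} {y : S × Q} (hy : y ∈ mSet Fn L δ x a') :
    y.1 ∈ Fn x.1 a' ∧ y.2 = δ x.2 (L y.1) := by
  rw [mSet, Finset.mem_image] at hy
  obtain ⟨s', hs', rfl⟩ := hy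
  exact ⟨hs', rfl⟩

lemma prodTN_eq (x : S × Q) (a : A) (Θ' : Finset (S × Q)) :
    prodTN Aset Fn err L δ x a Θ'
      = ∑ a' ∈ (Aset x.1).filter (fun a' => mSet Fn L δ x a' = Θ'), err x.1 a a' := by
  rw [prodTN, ← Finset.sum_fiberwise_of_maps_to
    (g := Fn x.1) (t := ((Aset x.1).image (Fn x.1)).filter
      (fun Θ => Θ.image (fun s' => (s', δ x.2 (L s'))) = Θ'))
    (fun a' ha' => by
      rw [Finset.mem_filter] at ha' ⊢
      exact ⟨Finset.mem_image_of_mem _ ha'.1, ha'.2⟩)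
    (fun a' => err x.1 a a')]
  refine Finset.sum_congr rfl fun Θ hΘ => ?_
  rw [inducedTN]
  refine Finset.sum_congr ?_ fun _ _ => rfl
  ext a'
  simp only [Finset.mem_filter, Finset.mem_filter] at *
  constructor
  · rintro ⟨ha', hfn⟩
    refine ⟨⟨ha', ?_⟩, hfn⟩
    rw [mSet, hfn]
    exact hΘ.2
  · rintro ⟨⟨ha', _⟩, hfn⟩
    exact ⟨ha', hfn⟩

lemma err_total {s : S} {a : A} : ∑ a' : A, err s a a' = 1 := by
  rw [← tsum_fintype (L := SummationFilter.unconditional _)]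
  exact (err s a).tsum_coe

lemma err_zero_of_not_mem (hsupp : ∀ s a, a ∈ Aset s → (err s a).support ⊆ ↑(Aset s))
    {s : S} {a a' : A} (ha : a ∈ Aset s) (ha' : a' ∉ Aset s) : err s a a' = 0 := by
  by_contra h
  exact ha' (hsupp s a ha (PMF.mem_support_iff _ _ |>.2 h))

lemma sum_err_restrict (hsupp : ∀ s a, a ∈ Aset s → (err s a).support ⊆ ↑(Aset s))
    {s : S} {a : A} (ha : a ∈ Aset s) (V : A → ℝ≥0∞) :
    ∑ a' : A, err s a a' * V a' = ∑ a' ∈ Aset s, err s a a' * V a' :=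
  (Finset.sum_subset (Finset.subset_univ _) (fun a' _ hna => by
    rw [err_zero_of_not_mem Aset err hsupp ha hna, zero_mul])).symm

lemma sum_err_Aset (hsupp : ∀ s a, a ∈ Aset s → (err s a).support ⊆ ↑(Aset s))
    {s : S} {a : A} (ha : a ∈ Aset s) :
    ∑ a' ∈ Aset s, err s a a' = 1 := by
  rw [← err_total (err := err) (s := s) (a := a)]
  exact Finset.sum_subset (Finset.subset_univ _) (fun a' _ hna =>
    err_zero_of_not_mem Aset err hsupp ha hna) |>.symm ▸ rfl

lemma sum_group (x : S × Q) (a : A) (β : Finset (S × Q) → S × Q) (V : S × Q → ℝ≥0∞) :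
    ∑ a' ∈ Aset x.1, err x.1 a a' * V (β (mSet Fn L δ x a'))
      = ∑ Θ' ∈ prodF Aset Fn L δ x, prodTN Aset Fn err L δ x a Θ' * V (β Θ') := by
  rw [← Finset.sum_fiberwise_of_maps_to (g := mSet Fn L δ x) (t := prodF Aset Fn L δ x)
    (fun a' ha' => (mem_prodF Aset Fn L δ).2 ⟨a', ha', rfl⟩)
    (fun a' => err x.1 a a' * V (β (mSet Fn L δ x a')))]
  refine Finset.sum_congr rfl fun Θ' hΘ' => ?_
  rw [prodTN_eq, Finset.sum_mul]
  refine Finset.sum_congr rfl fun a' ha' => ?_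
  rw [(Finset.mem_filter.1 ha').2]

lemma sum_prodTN (hsupp : ∀ s a, a ∈ Aset s → (err s a).support ⊆ ↑(Aset s))
    {x : S × Q} {a : A} (ha : a ∈ Aset x.1) :
    ∑ Θ' ∈ prodF Aset Fn L δ x, prodTN Aset Fn err L δ x a Θ' = 1 := by
  rw [Finset.sum_congr rfl (fun Θ' _ => prodTN_eq Aset Fn L err δ x a Θ'),
    Finset.sum_fiberwise_of_maps_to (g := mSet Fn L δ x)
      (fun a' ha' => (mem_prodF Aset Fn L δ).2 ⟨a', ha', rfl⟩) (fun a' => err x.1 a a')]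
  exact sum_err_Aset Aset err hsupp ha

end Struct
end TH
namespace TH
section Value
variable {S A Q P : Type*} [Fintype S] [Fintype A] [Fintype Q]
  [DecidableEq S] [DecidableEq A] [DecidableEq Q]
variable (Aset : S → Finset A) (Fn : S → A → Finset S) (L : S → Set P)
  (err : S → A → PMF A) (δ : Q → Set P → Q) (acc : Set Q)

def ValidSel (x : S × Q) : Type _ :=
  {α : Finset (S × Q) → S × Q // ∀ Θ' ∈ prodF Aset Fn L δ x, α Θ' ∈ Θ'}

noncomputable instance (x : S × Q) : Fintype (ValidSel Aset Fn L δ x) := by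
  unfold ValidSel; infer_instance

lemma validSel_nonempty (hFn : ∀ s a, a ∈ Aset s → (Fn s a).Nonempty) (x : S × Q) :
    Nonempty (ValidSel Aset Fn L δ x) := by
  refine ⟨⟨fun Θ' => if h : Θ'.Nonempty then h.choose else x, fun Θ' hΘ' => ?_⟩⟩
  simp only
  rw [dif_pos (prodF_nonempty Aset Fn L δ hFn hΘ')]
  exact (prodF_nonempty Aset Fn L δ hFn hΘ').choose_spec

noncomputable def Uval (σx : List (S × Q) → A) : ℕ → List (S × Q) → (S × Q) → ℝ≥0∞
  | 0, ps, x => indA acc (ps ++ [x])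
  | n+1, ps, x => ⨅ α : ValidSel Aset Fn L δ x,
      ∑ Θ' ∈ prodF Aset Fn L δ x,
        prodTN Aset Fn err L δ x (σx (ps ++ [x])) Θ' * Uval σx n (ps ++ [x]) (α.1 Θ')

variable {Aset Fn L err δ acc}

lemma Uval_acc (hFn : ∀ s a, a ∈ Aset s → (Fn s a).Nonempty)
    (hsupp : ∀ s a, a ∈ Aset s → (err s a).support ⊆ ↑(Aset s))
    {σx : List (S × Q) → A} (hσx : ∀ l x', σx (l ++ [x']) ∈ Aset x'.1) :
    ∀ (n : ℕ) (ps : List (S × Q)) (x : S × Q), (∃ z ∈ ps ++ [x], z.2 ∈ acc) →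
      Uval Aset Fn L err δ acc σx n ps x = 1 := by
  intro n
  induction n with
  | zero => intro ps x hl; rw [Uval, indA, if_pos hl]
  | succ n ih =>
    intro ps x hl
    haveI := validSel_nonempty Aset Fn L δ hFn x
    rw [Uval]
    have hterm : ∀ α : ValidSel Aset Fn L δ x,
        (∑ Θ' ∈ prodF Aset Fn L δ x,
          prodTN Aset Fn err L δ x (σx (ps ++ [x])) Θ' *
            Uval Aset Fn L err δ acc σx n (ps ++ [x]) (α.1 Θ')) = 1 := by
      intro α
      have : ∀ Θ' ∈ prodF Aset Fn L δ x,
          prodTN Aset Fn err L δ x (σx (ps ++ [x])) Θ' *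
            Uval Aset Fn L err δ acc σx n (ps ++ [x]) (α.1 Θ')
          = prodTN Aset Fn err L δ x (σx (ps ++ [x])) Θ' := by
        intro Θ' _
        rw [ih (ps ++ [x]) (α.1 Θ')
          (by obtain ⟨z, hz, hacc⟩ := hl; exact ⟨z, List.mem_append_left _ hz, hacc⟩),
          mul_one]
      rw [Finset.sum_congr rfl this]
      exact sum_prodTN Aset Fn L err δ hsupp (hσx ps x)
    rw [iInf_congr hterm, iInf_const]

lemma Uval_mono (hFn : ∀ s a, a ∈ Aset s → (Fn s a).Nonempty)
    (hsupp : ∀ s a, a ∈ Aset s → (err s a).support ⊆ ↑(Aset s))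
    {σx : List (S × Q) → A} (hσx : ∀ l x', σx (l ++ [x']) ∈ Aset x'.1) :
    ∀ (n : ℕ) (ps : List (S × Q)) (x : S × Q),
      Uval Aset Fn L err δ acc σx n ps x ≤ Uval Aset Fn L err δ acc σx (n+1) ps x := by
  intro n
  induction n with
  | zero =>
    intro ps x
    by_cases hl : ∃ z ∈ ps ++ [x], z.2 ∈ acc
    · rw [Uval_acc hFn hsupp hσx 0 ps x hl, Uval_acc hFn hsupp hσx 1 ps x hl]
    · rw [Uval, indA, if_neg hl]
      exact zero_le
  | succ n ih =>
    intro ps x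
    rw [Uval, Uval]
    exact iInf_mono fun α => Finset.sum_le_sum fun Θ' _ =>
      mul_le_mul' le_rfl (ih (ps ++ [x]) (α.1 Θ'))

lemma Uval_monotone (hFn : ∀ s a, a ∈ Aset s → (Fn s a).Nonempty)
    (hsupp : ∀ s a, a ∈ Aset s → (err s a).support ⊆ ↑(Aset s))
    {σx : List (S × Q) → A} (hσx : ∀ l x', σx (l ++ [x']) ∈ Aset x'.1)
    (ps : List (S × Q)) (x : S × Q) :
    Monotone (fun n => Uval Aset Fn L err δ acc σx n ps x) :=
  monotone_nat_of_le_succ fun n => Uval_mono hFn hsupp hσx n ps x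

end Value
end TH
namespace TH
section GammaStar
variable {S A Q P : Type*} [Fintype S] [Fintype A] [Fintype Q]
  [DecidableEq S] [DecidableEq A] [DecidableEq Q]
variable (Aset : S → Finset A) (Fn : S → A → Finset S) (L : S → Set P)
  (err : S → A → PMF A) (δ : Q → Set P → Q) (acc : Set Q)

lemma selStar_exists (hFn : ∀ s a, a ∈ Aset s → (Fn s a).Nonempty)
    (σx : List (S × Q) → A) (ps : List (S × Q)) (x : S × Q) (a : A) :
    ∃ α : ValidSel Aset Fn L δ x, ∀ β : ValidSel Aset Fn L δ x,
      (∑ Θ' ∈ prodF Aset Fn L δ x, prodTN Aset Fn err L δ x a Θ' *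
        ⨆ m, Uval Aset Fn L err δ acc σx m (ps ++ [x]) (α.1 Θ'))
      ≤ ∑ Θ' ∈ prodF Aset Fn L δ x, prodTN Aset Fn err L δ x a Θ' *
        ⨆ m, Uval Aset Fn L err δ acc σx m (ps ++ [x]) (β.1 Θ') :=
  haveI := validSel_nonempty Aset Fn L δ hFn x
  Finite.exists_min _

noncomputable def selStar (hFn : ∀ s a, a ∈ Aset s → (Fn s a).Nonempty)
    (σx : List (S × Q) → A) (ps : List (S × Q)) (x : S × Q) (a : A) :
    ValidSel Aset Fn L δ x :=
  (selStar_exists Aset Fn L err δ acc hFn σx ps x a).choose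

lemma selStar_min (hFn : ∀ s a, a ∈ Aset s → (Fn s a).Nonempty)
    (σx : List (S × Q) → A) (ps : List (S × Q)) (x : S × Q) (a : A) :
    ∀ β : ValidSel Aset Fn L δ x,
      (∑ Θ' ∈ prodF Aset Fn L δ x, prodTN Aset Fn err L δ x a Θ' *
        ⨆ m, Uval Aset Fn L err δ acc σx m (ps ++ [x])
          ((selStar Aset Fn L err δ acc hFn σx ps x a).1 Θ'))
      ≤ ∑ Θ' ∈ prodF Aset Fn L δ x, prodTN Aset Fn err L δ x a Θ' *
        ⨆ m, Uval Aset Fn L err δ acc σx m (ps ++ [x]) (β.1 Θ') :=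
  (selStar_exists Aset Fn L err δ acc hFn σx ps x a).choose_spec

noncomputable def gammaStar (hFn : ∀ s a, a ∈ Aset s → (Fn s a).Nonempty)
    (σx : List (S × Q) → A) : List (S × Q) → A → (S × Q) → ℝ≥0∞ := fun l a y =>
  if h : l = [] then 0 else
    ∑ Θ' ∈ (prodF Aset Fn L δ (l.getLast h)).filter
        (fun Θ' => (selStar Aset Fn L err δ acc hFn σx l.dropLast (l.getLast h) a).1 Θ' = y),
      prodTN Aset Fn err L δ (l.getLast h) a Θ'

lemma gammaStar_snoc (hFn : ∀ s a, a ∈ Aset s → (Fn s a).Nonempty)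
    (σx : List (S × Q) → A) (ps : List (S × Q)) (x : S × Q) (a : A) (y : S × Q) :
    gammaStar Aset Fn L err δ acc hFn σx (ps ++ [x]) a y
      = ∑ Θ' ∈ (prodF Aset Fn L δ x).filter
          (fun Θ' => (selStar Aset Fn L err δ acc hFn σx ps x a).1 Θ' = y),
        prodTN Aset Fn err L δ x a Θ' := by
  rw [gammaStar, dif_neg (show ¬(ps ++ [x] = []) by simp)]
  rw [show (ps ++ [x]).getLast (by simp : ¬(ps ++ [x] = [])) = x from
    List.getLast_append_of_ne_nil _ (by simp), List.dropLast_concat]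

lemma gammaStar_feasible (hFn : ∀ s a, a ∈ Aset s → (Fn s a).Nonempty)
    (σx : List (S × Q) → A) :
    FeasibleProd Aset Fn err L δ (gammaStar Aset Fn L err δ acc hFn σx) := by
  intro l x a _
  refine ⟨(selStar Aset Fn L err δ acc hFn σx l x a).1,
    (selStar Aset Fn L err δ acc hFn σx l x a).2, fun y => ?_⟩
  rw [gammaStar_snoc]

/-- Claim A: the optimal-nature recursion is bounded by the value function. -/
lemma recW_gammaStar_le (hFn : ∀ s a, a ∈ Aset s → (Fn s a).Nonempty)
    (hsupp : ∀ s a, a ∈ Aset s → (err s a).support ⊆ ↑(Aset s))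
    {σx : List (S × Q) → A} (hσx : ∀ l x', σx (l ++ [x']) ∈ Aset x'.1) :
    ∀ (n : ℕ) (ps : List (S × Q)) (x : S × Q),
      recWgen (fun l y => gammaStar Aset Fn L err δ acc hFn σx l (σx l) y) (indA acc)
          n (ps ++ [x])
        ≤ ⨆ m, Uval Aset Fn L err δ acc σx m ps x := by
  intro n
  induction n with
  | zero =>
    intro ps x
    exact le_iSup_of_le 0 (le_of_eq rfl)
  | succ n ih =>
    intro ps x
    haveI := validSel_nonempty Aset Fn L δ hFn x
    rw [recWgen]
    set a := σx (ps ++ [x]) with ha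
    set αs := selStar Aset Fn L err δ acc hFn σx ps x a with hαs
    calc (∑ y : S × Q, gammaStar Aset Fn L err δ acc hFn σx (ps ++ [x]) a y *
            recWgen (fun l y => gammaStar Aset Fn L err δ acc hFn σx l (σx l) y) (indA acc)
              n ((ps ++ [x]) ++ [y]))
        ≤ ∑ y : S × Q, gammaStar Aset Fn L err δ acc hFn σx (ps ++ [x]) a y *
            ⨆ m, Uval Aset Fn L err δ acc σx m (ps ++ [x]) y :=
          Finset.sum_le_sum fun y _ => mul_le_mul' le_rfl (ih (ps ++ [x]) y)
      _ = ∑ Θ' ∈ prodF Aset Fn L δ x, prodTN Aset Fn err L δ x a Θ' *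
            ⨆ m, Uval Aset Fn L err δ acc σx m (ps ++ [x]) (αs.1 Θ') := by
          rw [Finset.sum_congr rfl (fun y (_ : y ∈ Finset.univ) => by
            rw [gammaStar_snoc Aset Fn L err δ acc hFn σx ps x a y])]
          exact sum_filter_mul (prodF Aset Fn L δ x) αs.1
            (prodTN Aset Fn err L δ x a)
            (fun y => ⨆ m, Uval Aset Fn L err δ acc σx m (ps ++ [x]) y)
      _ = ⨅ β : ValidSel Aset Fn L δ x, ∑ Θ' ∈ prodF Aset Fn L δ x,
            prodTN Aset Fn err L δ x a Θ' *
            ⨆ m, Uval Aset Fn L err δ acc σx m (ps ++ [x]) (β.1 Θ') :=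
          le_antisymm (le_iInf fun β => selStar_min Aset Fn L err δ acc hFn σx ps x a β)
            (iInf_le _ αs)
      _ = ⨅ β : ValidSel Aset Fn L δ x, ⨆ m, ∑ Θ' ∈ prodF Aset Fn L δ x,
            prodTN Aset Fn err L δ x a Θ' *
            Uval Aset Fn L err δ acc σx m (ps ++ [x]) (β.1 Θ') := by
          refine iInf_congr fun β => ?_
          calc (∑ Θ' ∈ prodF Aset Fn L δ x, prodTN Aset Fn err L δ x a Θ' *
                  ⨆ m, Uval Aset Fn L err δ acc σx m (ps ++ [x]) (β.1 Θ'))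
              = ∑ Θ' ∈ prodF Aset Fn L δ x, ⨆ m, prodTN Aset Fn err L δ x a Θ' *
                  Uval Aset Fn L err δ acc σx m (ps ++ [x]) (β.1 Θ') :=
                Finset.sum_congr rfl fun Θ' _ => ENNReal.mul_iSup _ _
            _ = ⨆ m, ∑ Θ' ∈ prodF Aset Fn L δ x, prodTN Aset Fn err L δ x a Θ' *
                  Uval Aset Fn L err δ acc σx m (ps ++ [x]) (β.1 Θ') :=
                ENNReal.finsetSum_iSup_of_monotone fun Θ' m m' hmm =>
                  mul_le_mul' le_rfl (Uval_monotone hFn hsupp hσx (ps ++ [x]) (β.1 Θ') hmm)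
      _ = ⨆ m, ⨅ β : ValidSel Aset Fn L δ x, ∑ Θ' ∈ prodF Aset Fn L δ x,
            prodTN Aset Fn err L δ x a Θ' *
            Uval Aset Fn L err δ acc σx m (ps ++ [x]) (β.1 Θ') := by
          refine iInf_iSup_of_monotone _ fun β => ?_
          intro m m' hmm
          exact Finset.sum_le_sum fun Θ' _ => mul_le_mul' le_rfl
            (Uval_monotone hFn hsupp hσx (ps ++ [x]) (β.1 Θ') hmm)
      _ = ⨆ m, Uval Aset Fn L err δ acc σx (m+1) ps x := by
          exact iSup_congr fun m => by rw [Uval]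
      _ ≤ ⨆ m, Uval Aset Fn L err δ acc σx m ps x :=
          iSup_le fun m => le_iSup_of_le (m+1) le_rfl

end GammaStar
end TH
namespace TH
section Claims
variable {S A Q P : Type*} [Fintype S] [Fintype A] [Fintype Q]
  [DecidableEq S] [DecidableEq A] [DecidableEq Q]
variable {Aset : S → Finset A} {Fn : S → A → Finset S} {L : S → Set P}
  {err : S → A → PMF A} {δ : Q → Set P → Q} {acc : Set Q} {q0 : Q}

/-- Claim B: the value function bounds the recursion of any compliant environment. -/
lemma Uval_le_recN (hFn : ∀ s a, a ∈ Aset s → (Fn s a).Nonempty)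
    (hsupp : ∀ s a, a ∈ Aset s → (err s a).support ⊆ ↑(Aset s))
    {σx : List (S × Q) → A} (hσx : ∀ l x', σx (l ++ [x']) ∈ Aset x'.1)
    {γ : List (S × A) → S → A → S} (hγ : Compliant Aset Fn γ) (q0 : Q) :
    ∀ (n : ℕ) (u : S × List (S × A)),
      Uval Aset Fn L err δ acc σx n (liftHist L δ (u.2.map Prod.fst) q0)
          (u.1, qA L δ q0 (u.2.map Prod.fst ++ [u.1]))
        ≤ recNgen (fun u a' => (γ u.2 u.1 a', u.2 ++ [(u.1, a')]))
            (fun u a' => err u.1 (σx (liftHist L δ (u.2.map Prod.fst ++ [u.1]) q0)) a')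
            (fun u => indA acc (liftHist L δ (u.2.map Prod.fst ++ [u.1]) q0)) n u := by
  intro n
  induction n with
  | zero =>
    intro u
    apply le_of_eq
    show indA acc _ = indA acc (liftHist L δ (u.2.map Prod.fst ++ [u.1]) q0)
    rw [liftHist_snoc, qA_snoc]
  | succ n ih =>
    intro u
    obtain ⟨s, h⟩ := u
    simp only at ih ⊢
    set l2 := h.map Prod.fst with hl2
    set ps := liftHist L δ l2 q0 with hps
    set x : S × Q := (s, qA L δ q0 (l2 ++ [s])) with hx
    have hlift : liftHist L δ (l2 ++ [s]) q0 = ps ++ [x] := by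
      rw [liftHist_snoc, hps, hx, qA_snoc]
    have ha : σx (ps ++ [x]) ∈ Aset s := hσx ps x
    set a := σx (ps ++ [x]) with haa
    set V : S × Q → ℝ≥0∞ := fun y => Uval Aset Fn L err δ acc σx n (ps ++ [x]) y with hV
    obtain ⟨βf, hβmem, hβmin⟩ : ∃ βf : Finset (S × Q) → S × Q,
        (∀ Θ' ∈ prodF Aset Fn L δ x, βf Θ' ∈ Θ') ∧
        (∀ Θ' ∈ prodF Aset Fn L δ x, ∀ y ∈ Θ', V (βf Θ') ≤ V y) := by
      refine ⟨fun Θ' => if hne : Θ'.Nonempty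
          then (Finset.exists_min_image Θ' V hne).choose else x, ?_, ?_⟩
      · intro Θ' hΘ'
        have hne := prodF_nonempty Aset Fn L δ hFn hΘ'
        simp only [dif_pos hne]
        exact (Finset.exists_min_image Θ' V hne).choose_spec.1
      · intro Θ' hΘ' y hy
        have hne := prodF_nonempty Aset Fn L δ hFn hΘ'
        simp only [dif_pos hne]
        exact (Finset.exists_min_image Θ' V hne).choose_spec.2 y hy
    have hψ : ∀ a' ∈ Aset s, (γ h s a', δ x.2 (L (γ h s a'))) ∈ mSet Fn L δ x a' := by
      intro a' ha'
      exact Finset.mem_image_of_mem _ (hγ h s a' ha')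
    calc Uval Aset Fn L err δ acc σx (n+1) ps x
        ≤ ∑ Θ' ∈ prodF Aset Fn L δ x,
            prodTN Aset Fn err L δ x a Θ' * V (βf Θ') := iInf_le _ (⟨βf, hβmem⟩ : ValidSel Aset Fn L δ x)
      _ = ∑ a' ∈ Aset s, err s a a' * V (βf (mSet Fn L δ x a')) :=
          (sum_group Aset Fn L err δ x a βf V).symm
      _ ≤ ∑ a' ∈ Aset s, err s a a' * V ((γ h s a', δ x.2 (L (γ h s a')))) := by
          refine Finset.sum_le_sum fun a' ha' => mul_le_mul' le_rfl ?_
          exact hβmin (mSet Fn L δ x a') ((mem_prodF Aset Fn L δ).2 ⟨a', ha', rfl⟩)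
            _ (hψ a' ha')
      _ ≤ ∑ a' ∈ Aset s, err s a a' *
            recNgen (fun u a' => (γ u.2 u.1 a', u.2 ++ [(u.1, a')]))
              (fun u a' => err u.1 (σx (liftHist L δ (u.2.map Prod.fst ++ [u.1]) q0)) a')
              (fun u => indA acc (liftHist L δ (u.2.map Prod.fst ++ [u.1]) q0)) n
              ((γ h s a', h ++ [(s, a')])) := by
          refine Finset.sum_le_sum fun a' ha' => mul_le_mul' le_rfl ?_
          have := ih (γ h s a', h ++ [(s, a')])
          rw [show ((h ++ [(s, a')]).map Prod.fst) = l2 ++ [s] by simp [hl2]] at this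
          rw [hlift] at this
          rw [qA_snoc] at this
          exact this
      _ ≤ ∑ a' : A, err s a a' *
            recNgen (fun u a' => (γ u.2 u.1 a', u.2 ++ [(u.1, a')]))
              (fun u a' => err u.1 (σx (liftHist L δ (u.2.map Prod.fst ++ [u.1]) q0)) a')
              (fun u => indA acc (liftHist L δ (u.2.map Prod.fst ++ [u.1]) q0)) n
              ((γ h s a', h ++ [(s, a')])) :=
          Finset.sum_le_sum_of_subset (Finset.subset_univ _)
      _ = recNgen (fun u a' => (γ u.2 u.1 a', u.2 ++ [(u.1, a')]))
            (fun u a' => err u.1 (σx (liftHist L δ (u.2.map Prod.fst ++ [u.1]) q0)) a')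
            (fun u => indA acc (liftHist L δ (u.2.map Prod.fst ++ [u.1]) q0)) (n+1)
            ((s, h)) := by
          rw [recNgen]
          refine Finset.sum_congr rfl fun a' _ => ?_
          simp only
          rw [show ((h.map Prod.fst) ++ [s]) = l2 ++ [s] from rfl, hlift]

/-- Claim A': from any feasible nature we construct a compliant environment whose
recursion is dominated by the nature's recursion. -/
lemma recN_le_recW (hFn : ∀ s a, a ∈ Aset s → (Fn s a).Nonempty)
    (hsupp : ∀ s a, a ∈ Aset s → (err s a).support ⊆ ↑(Aset s))
    {σx : List (S × Q) → A} (hσx : ∀ l x', σx (l ++ [x']) ∈ Aset x'.1)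
    {γm : List (S × Q) → A → (S × Q) → ℝ≥0∞} (hγm : FeasibleProd Aset Fn err L δ γm)
    (q0 : Q) :
    ∃ γc, Compliant Aset Fn γc ∧
      ∀ (n : ℕ) (u : S × List (S × A)),
        recNgen (fun u a' => (γc u.2 u.1 a', u.2 ++ [(u.1, a')]))
            (fun u a' => err u.1 (σx (liftHist L δ (u.2.map Prod.fst ++ [u.1]) q0)) a')
            (fun u => indA acc (liftHist L δ (u.2.map Prod.fst ++ [u.1]) q0)) n u
          ≤ recWgen (fun l y => γm l (σx l) y) (indA acc) n
              (liftHist L δ (u.2.map Prod.fst ++ [u.1]) q0) := by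
  classical
  have hsel : ∀ (l : List (S × Q)) (x : S × Q) (a : A), ∃ α : Finset (S × Q) → S × Q,
      a ∈ Aset x.1 → ((∀ Θ' ∈ prodF Aset Fn L δ x, α Θ' ∈ Θ') ∧
        ∀ y, γm (l ++ [x]) a y
          = ∑ Θ' ∈ (prodF Aset Fn L δ x).filter (fun Θ' => α Θ' = y),
              prodTN Aset Fn err L δ x a Θ') := by
    intro l x a
    by_cases ha : a ∈ Aset x.1
    · obtain ⟨α, h1, h2⟩ := hγm l x a ha
      exact ⟨α, fun _ => ⟨h1, h2⟩⟩
    · exact ⟨fun _ => x, fun hcon => absurd hcon ha⟩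
  choose αg hαg using hsel
  refine ⟨fun h s a' =>
    if a' ∈ Aset s then
      (αg (liftHist L δ (h.map Prod.fst) q0)
          (s, qA L δ q0 (h.map Prod.fst ++ [s]))
          (σx (liftHist L δ (h.map Prod.fst ++ [s]) q0))
          (mSet Fn L δ (s, qA L δ q0 (h.map Prod.fst ++ [s])) a')).1
    else s, ?_, ?_⟩
  · -- compliance
    intro h s a' ha'
    simp only [if_pos ha']
    set x : S × Q := (s, qA L δ q0 (h.map Prod.fst ++ [s])) with hx
    have hax : σx (liftHist L δ (h.map Prod.fst ++ [s]) q0) ∈ Aset x.1 := by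
      rw [liftHist_snoc]
      exact hσx _ _
    have hmem := (hαg (liftHist L δ (h.map Prod.fst) q0) x
      (σx (liftHist L δ (h.map Prod.fst ++ [s]) q0)) hax).1
      (mSet Fn L δ x a') ((mem_prodF Aset Fn L δ).2 ⟨a', ha', rfl⟩)
    exact (mem_mSet_snd Fn L δ hmem).1
  · -- the recursion inequality
    intro n
    induction n with
    | zero => intro u; exact le_of_eq rfl
    | succ n ih =>
      intro u
      obtain ⟨s, h⟩ := u
      simp only [recNgen, recWgen]
      set l2 := h.map Prod.fst with hl2
      have hlift : liftHist L δ (l2 ++ [s]) q0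
          = liftHist L δ l2 q0 ++ [(s, qA L δ q0 (l2 ++ [s]))] := by
        rw [liftHist_snoc, qA_snoc]
      set ps := liftHist L δ l2 q0 with hps
      set x : S × Q := (s, qA L δ q0 (l2 ++ [s])) with hx
      have hax : σx (liftHist L δ (l2 ++ [s]) q0) ∈ Aset s := by
        rw [hlift]; exact hσx ps x
      set a := σx (liftHist L δ (l2 ++ [s]) q0) with haa
      have hvalid := (hαg ps x a hax).1
      have hform := (hαg ps x a hax).2
      rw [hlift]
      set W : S × Q → ℝ≥0∞ := fun y =>
        recWgen (fun l y => γm l (σx l) y) (indA acc) n ((ps ++ [x]) ++ [y]) with hW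
      refine le_trans (le_of_eq (sum_err_restrict Aset err hsupp hax _)) ?_
      refine le_trans (b := ∑ a' ∈ Aset s, err s a a' * W (αg ps x a (mSet Fn L δ x a')))
        (Finset.sum_le_sum (fun a' ha' => mul_le_mul' le_rfl ?_)) (le_of_eq ?_)
      · -- recNgen n (next) ≤ W (αg ps x a (mSet x a'))
        rw [if_pos ha']
        have hy := hvalid (mSet Fn L δ x a') ((mem_prodF Aset Fn L δ).2 ⟨a', ha', rfl⟩)
        have hy2 := (mem_mSet_snd Fn L δ hy).2
        have hih := ih ((αg ps x a (mSet Fn L δ x a')).1, h ++ [(s, a')])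
        rw [show ((h ++ [(s, a')]).map Prod.fst) = l2 ++ [s] by simp [hl2]] at hih
        rw [liftHist_snoc, qA_snoc, hlift] at hih
        refine le_trans hih (le_of_eq ?_)
        rw [hW]
        simp only
        congr 2
        have hy2' : (αg ps x a (mSet Fn L δ x a')).2
            = δ (δ (qA L δ q0 l2) (L s)) (L (αg ps x a (mSet Fn L δ x a')).1) := by
          rw [← qA_snoc L δ q0 l2 s]; exact hy2
        rw [← hy2']
      · -- regroup the sum
        rw [sum_group Aset Fn L err δ x a (αg ps x a) W,
          ← sum_filter_mul (prodF Aset Fn L δ x) (αg ps x a)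
            (prodTN Aset Fn err L δ x a) W]
        refine Finset.sum_congr rfl fun y _ => ?_
        rw [← hform y]
end Claims
end TH
namespace TH
section Final
variable {S A Q P : Type*} [Fintype S] [Fintype A] [Fintype Q]
  [DecidableEq S] [DecidableEq A] [DecidableEq Q]
variable {Aset : S → Finset A} {Fn : S → A → Finset S} {L : S → Set P}
  {err : S → A → PMF A} {δ : Q → Set P → Q} {acc : Set Q}

/-- The value lemma: the robust value of `σx` in the product MDPST equals the
trembling-hand value of the lifted strategy. -/
lemma value_eq (hFn : ∀ s a, a ∈ Aset s → (Fn s a).Nonempty)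
    (hsupp : ∀ s a, a ∈ Aset s → (err s a).support ⊆ ↑(Aset s))
    (s0 : S) (dA : A) (q0 : Q)
    {σx : List (S × Q) → A} (hσx : ∀ l x', σx (l ++ [x']) ∈ Aset x'.1) :
    (⨅ γx : {γx : List (S × Q) → A → (S × Q) → ℝ≥0∞ // FeasibleProd Aset Fn err L δ γx},
        prMDPST (s0, δ q0 (L s0)) γx.1 σx (reachWithin acc))
      = ⨅ γ : {γ : List (S × A) → S → A → S // Compliant Aset Fn γ},
          prN s0 dA err γ.1 (fun h => σx (liftHist L δ h q0)) (goalWithin L q0 δ acc) := by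
  apply le_antisymm
  · refine le_iInf fun γ => ?_
    refine iInf_le_of_le ⟨gammaStar Aset Fn L err δ acc hFn σx,
      gammaStar_feasible Aset Fn L err δ acc hFn σx⟩ ?_
    rw [prMDPST_eq, prN_eq]
    refine le_trans (b := ⨆ m, Uval Aset Fn L err δ acc σx m [] (s0, δ q0 (L s0)))
      (iSup_le fun n => ?_) (iSup_mono fun m => ?_)
    · exact recW_gammaStar_le Aset Fn L err δ acc hFn hsupp hσx n [] (s0, δ q0 (L s0))
    · exact Uval_le_recN hFn hsupp hσx γ.2 q0 m (s0, [])
  · refine le_iInf fun γx => ?_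
    obtain ⟨γc, hcomp, hle⟩ := recN_le_recW hFn hsupp hσx γx.2 q0
    refine iInf_le_of_le ⟨γc, hcomp⟩ ?_
    rw [prMDPST_eq, prN_eq]
    refine iSup_le fun n => le_iSup_of_le n ?_
    exact hle n (s0, [])

lemma lift_applicable (q0 : Q) {σx : List (S × Q) → A}
    (hσx : ∀ l x', σx (l ++ [x']) ∈ Aset x'.1) (l : List S) (s : S) :
    σx (liftHist L δ (l ++ [s]) q0) ∈ Aset s := by
  rw [liftHist_snoc]
  exact hσx _ _

lemma proj_applicable {σ : List S → A} (hσ : ∀ l s, σ (l ++ [s]) ∈ Aset s)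
    (l : List (S × Q)) (x : S × Q) :
    σ ((l ++ [x]).map Prod.fst) ∈ Aset x.1 := by
  rw [List.map_append]
  exact hσ _ _

lemma prN_proj_lift (q0 : Q) (s0 : S) (dA : A) (σ : List S → A)
    (γ : List (S × A) → S → A → S) :
    prN s0 dA err γ (fun h => (fun l : List (S × Q) => σ (l.map Prod.fst))
        (liftHist L δ h q0)) (goalWithin L q0 δ acc)
      = prN s0 dA err γ σ (goalWithin L q0 δ acc) := by
  congr 1
  funext h
  show σ ((liftHist L δ h q0).map Prod.fst) = σ h
  rw [map_fst_liftHist]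

end Final
end TH
/-- Theorem 4: The maximum over agent strategies of the minimum over
natures of the probability of reaching `acc× = {(s,q) : q ∈ acc}` in the product MDPST
`M_N× = M_N ⊗ Aut` equals the maximum over agent strategies of the minimum over
environment strategies of `Pr_N^{σ,γ,E}(goal)`; moreover, any optimal robust strategy
of `M_N×` for the reachability goal `acc×` induces, via the lifting of paths of `N` to
paths of `M_N×`, an optimal strategy for the trembling-hand problem `(N, goal, E)`. -/
theorem stmt13 {S A Q P : Type*} [Fintype S] [Fintype A] [Fintype Q]
    [DecidableEq S] [DecidableEq A] [DecidableEq Q]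
    (s0 : S) (Aset : S → Finset A) (hA : ∀ s, (Aset s).Nonempty) (dA : A)
    (Fn : S → A → Finset S)
    (hFn : ∀ s a, a ∈ Aset s → (Fn s a).Nonempty)
    (L : S → Set P)
    (err : S → A → PMF A)
    (hsupp : ∀ s a, a ∈ Aset s → (err s a).support ⊆ ↑(Aset s))
    (q0 : Q) (δ : Q → Set P → Q) (acc : Set Q) :
    (⨆ σx : {σx : List (S × Q) → A //
        ∀ (l : List (S × Q)) (x : S × Q), σx (l ++ [x]) ∈ Aset x.1},
      ⨅ γx : {γx : List (S × Q) → A → (S × Q) → ℝ≥0∞ //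
          FeasibleProd Aset Fn err L δ γx},
        prMDPST (s0, δ q0 (L s0)) γx.1 σx.1 (reachWithin acc))
      = (⨆ σ : {σ : List S → A // ∀ (l : List S) (s : S), σ (l ++ [s]) ∈ Aset s},
          ⨅ γ : {γ : List (S × A) → S → A → S // Compliant Aset Fn γ},
            prN s0 dA err γ.1 σ.1 (goalWithin L q0 δ acc)) ∧
    (∀ σx : List (S × Q) → A,
      (∀ (l : List (S × Q)) (x : S × Q), σx (l ++ [x]) ∈ Aset x.1) →
      (∀ σx' : List (S × Q) → A,
        (∀ (l : List (S × Q)) (x : S × Q), σx' (l ++ [x]) ∈ Aset x.1) →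
        (⨅ γx : {γx : List (S × Q) → A → (S × Q) → ℝ≥0∞ //
            FeasibleProd Aset Fn err L δ γx},
          prMDPST (s0, δ q0 (L s0)) γx.1 σx' (reachWithin acc))
          ≤ ⨅ γx : {γx : List (S × Q) → A → (S × Q) → ℝ≥0∞ //
              FeasibleProd Aset Fn err L δ γx},
            prMDPST (s0, δ q0 (L s0)) γx.1 σx (reachWithin acc)) →
      (∀ (l : List S) (s : S),
          (fun h => σx (liftHist L δ h q0)) (l ++ [s]) ∈ Aset s) ∧
      (∀ σ : List S → A, (∀ (l : List S) (s : S), σ (l ++ [s]) ∈ Aset s) →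
        (⨅ γ : {γ : List (S × A) → S → A → S // Compliant Aset Fn γ},
            prN s0 dA err γ.1 σ (goalWithin L q0 δ acc))
          ≤ ⨅ γ : {γ : List (S × A) → S → A → S // Compliant Aset Fn γ},
              prN s0 dA err γ.1 (fun h => σx (liftHist L δ h q0))
                (goalWithin L q0 δ acc))) := by
  constructor
  · -- Part 1: equality of the game values
    apply le_antisymm
    · refine iSup_le fun σx => ?_
      refine le_iSup_of_le ⟨fun h => σx.1 (liftHist L δ h q0),
        fun l s => TH.lift_applicable q0 σx.2 l s⟩ ?_
      exact le_of_eq (TH.value_eq hFn hsupp s0 dA q0 σx.2)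
    · refine iSup_le fun σ => ?_
      refine le_iSup_of_le ⟨fun l : List (S × Q) => σ.1 (l.map Prod.fst),
        TH.proj_applicable σ.2⟩ ?_
      rw [TH.value_eq hFn hsupp s0 dA q0 (TH.proj_applicable σ.2)]
      exact le_of_eq (iInf_congr fun γ => (TH.prN_proj_lift q0 s0 dA σ.1 γ.1).symm)
  · -- Part 2: optimal strategies transfer
    intro σx hσx hopt
    refine ⟨fun l s => TH.lift_applicable q0 hσx l s, fun σ hσ => ?_⟩
    have e1 := TH.value_eq (acc := acc) (L := L) (δ := δ) (σx := fun l : List (S × Q) => σ (l.map Prod.fst))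
      hFn hsupp s0 dA q0 (TH.proj_applicable hσ)
    have e2 := TH.value_eq (acc := acc) (L := L) (δ := δ) hFn hsupp s0 dA q0 hσx
    rw [← e2]
    have e0 : (⨅ γ : {γ : List (S × A) → S → A → S // Compliant Aset Fn γ},
          prN s0 dA err γ.1 σ (goalWithin L q0 δ acc))
        = ⨅ γ : {γ : List (S × A) → S → A → S // Compliant Aset Fn γ},
            prN s0 dA err γ.1
              (fun h => (fun l : List (S × Q) => σ (l.map Prod.fst)) (liftHist L δ h q0))
              (goalWithin L q0 δ acc) :=
      by
        refine iInf_congr fun γ => ?_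
        exact (TH.prN_proj_lift q0 s0 dA σ γ.1).symm
    rw [e0, ← e1]
    exact hopt _ (TH.proj_applicable hσ)
end
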